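/- arXiv:1003.5087 — 11 statements merged into one kernel-verified Lean document; each statement's English description precedes it below -/
import Mathlib

section
/- If X and Y are finite metric spaces each with n points and d_GH(X,Y) < (1/2)·cdm(Y), then there exist enumerations x_1,…,x_n of X and y_1,…,y_n of Y such that (1/2)·max_{i,j} |d_X(x_i,x_j) − d_Y(y_i,y_j)| ≤ d_GH(X,Y). -/
/-! In the optimal Gromov–Hausdorff coupling of `X` and `Y`, sending each `x` to a point of `Y`
within `d_GH(X, Y)` of it gives a map `f : X → Y` that distorts distances by at most
`2 d_GH(X, Y)`. Every `y` lies within `d_GH(X, Y)` of some `x`, and then `d(f x, y) ≤ 2 d_GH(X, Y)`,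
which is below the codiameter of `Y`; hence `f x = y`, so `f` is onto and, by counting, a
bijection. Enumerating `X` arbitrarily and `Y` through `f` gives the claim. -/

open GromovHausdorff Metric Set Function

theorem IsCompact.exists_dist_le_hausdorffDist {α : Type*} [PseudoMetricSpace α] {s t : Set α}
    {x : α} (hx : x ∈ s) (hs : Bornology.IsBounded s) (ht : IsCompact t) (hne : t.Nonempty) :
    ∃ y ∈ t, dist x y ≤ hausdorffDist s t := by
  obtain ⟨y, hy, hxy⟩ := ht.exists_infDist_eq_dist hne x
  exact ⟨y, hy, hxy ▸ infDist_le_hausdorffDist_of_mem hx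
    (hausdorffEDist_ne_top_of_nonempty_of_bounded ⟨x, hx⟩ hne hs ht.isBounded)⟩

/-- For `Y` with fewer than two points this is the junk value `sInf ∅ = 0`. -/
noncomputable def codiam (Y : Type*) [PseudoMetricSpace Y] : ℝ :=
  sInf {d : ℝ | ∃ y y' : Y, y ≠ y' ∧ d = dist y y'}

theorem codiam_le_dist {Y : Type*} [PseudoMetricSpace Y] {y y' : Y} (h : y ≠ y') :
    codiam Y ≤ dist y y' :=
  csInf_le ⟨0, by rintro _ ⟨_, _, -, rfl⟩; exact dist_nonneg⟩ ⟨y, y', h, rfl⟩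

section Coupling

variable {X Y Z : Type*} [PseudoMetricSpace Y] [PseudoMetricSpace Z]
  {Φ : X → Z} {Ψ : Y → Z} {f : X → Y} {r : ℝ}

theorem abs_dist_sub_dist_le_of_dist_le [PseudoMetricSpace X] (hΦ : Isometry Φ) (hΨ : Isometry Ψ)
    (hf : ∀ x, dist (Φ x) (Ψ (f x)) ≤ r) (x x' : X) :
    |dist x x' - dist (f x) (f x')| ≤ 2 * r := by
  have h := dist_dist_dist_le (Φ x) (Φ x') (Ψ (f x)) (Ψ (f x'))
  rw [hΦ.dist_eq, hΨ.dist_eq, Real.dist_eq] at h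
  linarith [hf x, hf x']

theorem surjective_of_dist_le (hΨ : Isometry Ψ) (hf : ∀ x, dist (Φ x) (Ψ (f x)) ≤ r)
    (hcover : ∀ y, ∃ x, dist (Φ x) (Ψ y) ≤ r) (hsep : ∀ y y' : Y, y ≠ y' → 2 * r < dist y y') :
    Surjective f := by
  intro y
  obtain ⟨x, hx⟩ := hcover y
  refine ⟨x, not_not.1 fun hne => (hsep _ _ hne).not_ge ?_⟩
  calc dist (f x) y = dist (Ψ (f x)) (Ψ y) := (hΨ.dist_eq _ _).symm
    _ ≤ dist (Φ x) (Ψ (f x)) + dist (Φ x) (Ψ y) := dist_triangle_left _ _ _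
    _ ≤ 2 * r := by linarith [hf x]

end Coupling

namespace GromovHausdorff

variable {X Y : Type*} [MetricSpace X] [CompactSpace X] [Nonempty X]
  [MetricSpace Y] [CompactSpace Y] [Nonempty Y]

theorem exists_dist_optimalGHInj_le_ghDist_left (x : X) :
    ∃ y : Y, dist (optimalGHInjl X Y x) (optimalGHInjr X Y y) ≤ ghDist X Y := by
  obtain ⟨_, ⟨y, rfl⟩, hy⟩ :=
    (isCompact_range (isometry_optimalGHInjr X Y).continuous).exists_dist_le_hausdorffDist
      (mem_range_self x) (isCompact_range (isometry_optimalGHInjl X Y).continuous).isBounded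
      (range_nonempty (optimalGHInjr X Y))
  rw [hausdorffDist_optimal] at hy
  exact ⟨y, hy⟩

theorem exists_dist_optimalGHInj_le_ghDist_right (y : Y) :
    ∃ x : X, dist (optimalGHInjl X Y x) (optimalGHInjr X Y y) ≤ ghDist X Y := by
  obtain ⟨_, ⟨x, rfl⟩, hx⟩ :=
    (isCompact_range (isometry_optimalGHInjl X Y).continuous).exists_dist_le_hausdorffDist
      (mem_range_self y) (isCompact_range (isometry_optimalGHInjr X Y).continuous).isBounded
      (range_nonempty (optimalGHInjl X Y))
  rw [hausdorffDist_comm, hausdorffDist_optimal] at hx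
  exact ⟨x, by rwa [dist_comm] at hx⟩

theorem exists_surjective_abs_dist_sub_dist_le_two_mul_ghDist
    (hsep : ∀ y y' : Y, y ≠ y' → 2 * ghDist X Y < dist y y') :
    ∃ f : X → Y, Surjective f ∧ ∀ x x', |dist x x' - dist (f x) (f x')| ≤ 2 * ghDist X Y := by
  choose f hf using exists_dist_optimalGHInj_le_ghDist_left (X := X) (Y := Y)
  exact ⟨f, surjective_of_dist_le (isometry_optimalGHInjr X Y) hf
      exists_dist_optimalGHInj_le_ghDist_right hsep,
    abs_dist_sub_dist_le_of_dist_le (isometry_optimalGHInjl X Y) (isometry_optimalGHInjr X Y) hf⟩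

end GromovHausdorff

/-- If `X` and `Y` are `n`-point metric spaces with `d_GH(X,Y) < (1/2) cdm(Y)`, then the points
can be enumerated so that `(1/2) max |d_X(x_i,x_j) - d_Y(y_i,y_j)| ≤ d_GH(X,Y)`. -/
theorem exists_enumerations_of_ghDist_lt_half_codiam (n : ℕ) (X Y : Type*)
    [MetricSpace X] [MetricSpace Y] [Fintype X] [Fintype Y] [Nonempty X] [Nonempty Y]
    (hX : Fintype.card X = n) (hY : Fintype.card Y = n)
    (h : ghDist X Y < (1 / 2) * sInf {d : ℝ | ∃ y y' : Y, y ≠ y' ∧ d = dist y y'}) :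
    ∃ (e₁ : Fin n ≃ X) (e₂ : Fin n ≃ Y), ∀ i j : Fin n,
      (1 / 2) * |dist (e₁ i) (e₁ j) - dist (e₂ i) (e₂ j)| ≤ ghDist X Y := by
  have hsep (y y' : Y) (hne : y ≠ y') : 2 * ghDist X Y < dist y y' := by
    have : ghDist X Y < (1 / 2) * codiam Y := h
    linarith [codiam_le_dist hne]
  obtain ⟨f, hf_surj, hf_dist⟩ := exists_surjective_abs_dist_sub_dist_le_two_mul_ghDist hsep
  have hf_bij : Bijective f :=
    (Fintype.bijective_iff_surjective_and_card f).2 ⟨hf_surj, hX.trans hY.symm⟩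
  let e := (Fintype.equivFinOfCardEq hX).symm
  refine ⟨e, e.trans (Equiv.ofBijective f hf_bij), fun i j => ?_⟩
  simp only [Equiv.trans_apply, Equiv.ofBijective_apply]
  linarith [hf_dist (e i) (e j)]
end

section
/- Totally anisometric compact metric spaces with no three pairwise distinct collinear points are dense in the Gromov-Hausdorff space. -/
open GromovHausdorff

/-- A metric space is totally anisometric if distinct unordered pairs of points have
distinct distances. -/
def TotallyAnisometric (X : Type*) [MetricSpace X] : Prop :=
  ∀ x y x' y' : X, dist x y = dist x' y' → 0 < dist x y →
    (x = x' ∧ y = y') ∨ (x = y' ∧ y = x')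

/-- A metric space has no collinear triple if for pairwise distinct points `x, y, z`, no
distance is the sum of the two others. -/
def NoCollinearTriple (X : Type*) [MetricSpace X] : Prop :=
  ∀ x y z : X, x ≠ y → y ≠ z → x ≠ z → dist x z + dist z y ≠ dist x y

/-!
Approximate a compact space by a finite `ε`-net and raise the distance between any two distinct
points of the net by an amount in `(δ, 2δ)`. Two raises add up to more than `2δ`, hence more than
any third one, so every triangle inequality between distinct points becomes strict; choosing the
raises generically, all distances become distinct. The new finite space is `ε + δ`-close to the
original one in the Gromov–Hausdorff distance.
-/

open Set Function

theorem Set.Infinite.exists_injOn_add {ι G : Type*} [AddCommGroup G] {S : Set G}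
    (hS : S.Infinite) (g : ι → G) {s : Set ι} (hs : s.Finite) :
    ∃ c : ι → S, InjOn (fun i => g i + c i) s := by
  classical
  induction s, hs using Set.Finite.induction_on with
  | empty => exact ⟨fun _ => ⟨_, hS.nonempty.some_mem⟩, injOn_empty _⟩
  | @insert a s has hs ih =>
    obtain ⟨c, hc⟩ := ih
    obtain ⟨v, hvS, hv⟩ :=
      hS.exists_notMem_finite ((hs.image fun i => g i + c i).image (· - g a))
    refine ⟨update c a ⟨v, hvS⟩, (injOn_insert has).2 ⟨?_, ?_⟩⟩
    · exact hc.congr fun i hi => by simp [update_of_ne (ne_of_mem_of_not_mem hi has)]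
    · rintro ⟨i, hi, hia⟩
      refine hv ⟨_, ⟨i, hi, rfl⟩, ?_⟩
      simp only [update_of_ne (ne_of_mem_of_not_mem hi has), update_self] at hia
      simp [hia]

section Isometry

variable {X Y : Type*} [MetricSpace X] [MetricSpace Y] {f : X → Y}

theorem TotallyAnisometric.of_isometry (hf : Isometry f) (h : TotallyAnisometric Y) :
    TotallyAnisometric X := by
  intro x y x' y' hd hpos
  rw [← hf.dist_eq, ← hf.dist_eq] at hd
  rw [← hf.dist_eq] at hpos
  simpa only [hf.injective.eq_iff] using h _ _ _ _ hd hpos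

theorem NoCollinearTriple.of_isometry (hf : Isometry f) (h : NoCollinearTriple Y) :
    NoCollinearTriple X := by
  intro x y z hxy hyz hxz
  simpa only [hf.dist_eq] using
    h _ _ _ (hf.injective.ne hxy) (hf.injective.ne hyz) (hf.injective.ne hxz)

end Isometry

section Perturbation

variable {X : Type*} [MetricSpace X] {δ : ℝ} (c : Sym2 X → Ioo δ (2 * δ)) {x y z : X}

open scoped Classical in
noncomputable def perturbedDist (x y : X) : ℝ :=
  if x = y then 0 else dist x y + c s(x, y)

@[simp]
theorem perturbedDist_self (x : X) : perturbedDist c x x = 0 :=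
  if_pos rfl

theorem perturbedDist_of_ne (h : x ≠ y) : perturbedDist c x y = dist x y + c s(x, y) :=
  if_neg h

theorem perturbedDist_comm (x y : X) : perturbedDist c x y = perturbedDist c y x := by
  rcases eq_or_ne x y with rfl | h
  · rfl
  · rw [perturbedDist_of_ne c h, perturbedDist_of_ne c h.symm, dist_comm, Sym2.eq_swap]

theorem perturbedDist_pos (h : x ≠ y) : 0 < perturbedDist c x y := by
  obtain ⟨hδ, hδ'⟩ := (c s(x, y)).2
  rw [perturbedDist_of_ne c h]
  linarith [dist_nonneg (x := x) (y := y)]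

theorem perturbedDist_nonneg (x y : X) : 0 ≤ perturbedDist c x y := by
  rcases eq_or_ne x y with rfl | h
  · exact (perturbedDist_self c x).ge
  · exact (perturbedDist_pos c h).le

theorem perturbedDist_triangle_lt (hxy : x ≠ y) (hyz : y ≠ z) (hxz : x ≠ z) :
    perturbedDist c x y < perturbedDist c x z + perturbedDist c z y := by
  rw [perturbedDist_of_ne c hxy, perturbedDist_of_ne c hxz, perturbedDist_of_ne c hyz.symm]
  have := (c s(x, y)).2.2
  have := (c s(x, z)).2.1
  have := (c s(z, y)).2.1
  linarith [dist_triangle x z y]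

theorem perturbedDist_triangle (x y z : X) :
    perturbedDist c x y ≤ perturbedDist c x z + perturbedDist c z y := by
  rcases eq_or_ne x y with rfl | hxy
  · simpa using add_nonneg (perturbedDist_nonneg c x z) (perturbedDist_nonneg c z x)
  rcases eq_or_ne x z with rfl | hxz
  · simp
  rcases eq_or_ne y z with rfl | hyz
  · simp
  exact (perturbedDist_triangle_lt c hxy hyz hxz).le

theorem abs_perturbedDist_sub_dist_le (x y : X) : |perturbedDist c x y - dist x y| ≤ 2 * δ := by
  obtain ⟨hδ, hδ'⟩ := (c s(x, y)).2
  rcases eq_or_ne x y with rfl | h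
  · simp only [perturbedDist_self, dist_self, sub_self, abs_zero]
    linarith
  · rw [perturbedDist_of_ne c h, add_sub_cancel_left, abs_of_pos (by linarith)]
    exact hδ'.le

def Perturbed (X : Type*) {δ : ℝ} (_c : Sym2 X → Ioo δ (2 * δ)) : Type _ := X

namespace Perturbed

def equiv : X ≃ Perturbed X c := Equiv.refl X

noncomputable instance : MetricSpace (Perturbed X c) where
  dist x y := perturbedDist c ((equiv c).symm x) ((equiv c).symm y)
  dist_self := perturbedDist_self c
  dist_comm := perturbedDist_comm c
  dist_triangle x y z := perturbedDist_triangle c x z y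
  eq_of_dist_eq_zero {x y} h := not_not.1 fun hxy => (perturbedDist_pos c hxy).ne' h

instance [Finite X] : Finite (Perturbed X c) := ‹Finite X›

instance [Nonempty X] : Nonempty (Perturbed X c) := ‹Nonempty X›

theorem noCollinearTriple : NoCollinearTriple (Perturbed X c) :=
  fun _ _ _ hxy hyz hxz => (perturbedDist_triangle_lt c hxy hyz hxz).ne'

theorem totallyAnisometric (hc : Injective fun p => Sym2.lift ⟨dist, dist_comm⟩ p + c p) :
    TotallyAnisometric (Perturbed X c) := by
  intro x y x' y' hd hpos
  have hxy : x ≠ y := by rintro rfl; exact hpos.ne' (dist_self _)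
  have hxy' : x' ≠ y' := by rintro rfl; exact hpos.ne' (hd.trans (dist_self _))
  change perturbedDist c x y = perturbedDist c x' y' at hd
  rw [perturbedDist_of_ne c hxy, perturbedDist_of_ne c hxy'] at hd
  exact Sym2.eq_iff.1 (@hc s(x, y) s(x', y') hd)

end Perturbed

open GromovHausdorff in
theorem ghDist_perturbed_le [CompactSpace X] [Nonempty X] {s : Set X} [Finite s]
    [Nonempty s] {ε : ℝ} (hs : ∀ x, ∃ y ∈ s, dist x y ≤ ε) (c : Sym2 s → Ioo δ (2 * δ)) :
    ghDist X (Perturbed s c) ≤ ε + δ := by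
  have := ghDist_le_of_approx_subsets (Perturbed.equiv c) hs (ε₃ := 0)
    (fun x => ⟨(Perturbed.equiv c).symm x, (dist_self x).le⟩) fun x y => by
      rw [abs_sub_comm]
      exact abs_perturbedDist_sub_dist_le c x y
  linarith

end Perturbation

theorem GromovHausdorff.GHSpace.dist_toGHSpace (p : GHSpace) (Y : Type*) [MetricSpace Y]
    [CompactSpace Y] [Nonempty Y] :
    dist p (toGHSpace Y) = ghDist p.Rep Y := by
  conv_lhs => rw [← p.toGHSpace_rep]
  rfl

/-- Totally anisometric spaces without collinear triples are dense in the
Gromov-Hausdorff space. -/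
theorem dense_anisometric_noCollinear :
    Dense {p : GHSpace | TotallyAnisometric p.Rep ∧ NoCollinearTriple p.Rep} := by
  refine Metric.dense_iff.2 fun p ε hε => ?_
  obtain ⟨t, -, ht, hcover⟩ :=
    finite_cover_balls_of_compact (X := p.Rep) isCompact_univ (e := ε / 4) (by positivity)
  have hnet : ∀ x, ∃ y ∈ t, dist x y ≤ ε / 4 := fun x => by
    obtain ⟨y, hy, hxy⟩ := mem_iUnion₂.1 (hcover (mem_univ x))
    exact ⟨y, hy, (Metric.mem_ball.1 hxy).le⟩
  have : Finite t := ht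
  have : Nonempty t := let ⟨y, hy, _⟩ := hnet (Classical.arbitrary _); ⟨⟨y, hy⟩⟩
  obtain ⟨c, hc⟩ := (Ioo_infinite (by linarith : ε / 4 < 2 * (ε / 4))).exists_injOn_add
    (Sym2.lift ⟨dist, dist_comm⟩) (finite_univ (α := Sym2 t))
  refine ⟨toGHSpace (Perturbed t c), ?_, ?_⟩
  · rw [Metric.mem_ball, dist_comm, p.dist_toGHSpace]
    linarith [ghDist_perturbed_le hnet c]
  · obtain ⟨e⟩ :=
      toGHSpace_eq_toGHSpace_iff_isometryEquiv.1 (toGHSpace (Perturbed t c)).toGHSpace_rep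
    exact ⟨(Perturbed.totallyAnisometric c (injOn_univ.1 hc)).of_isometry e.isometry,
      Perturbed.noCollinearTriple c |>.of_isometry e.isometry⟩
end

section
/- A generic compact metric space is totally disconnected; that is, the set of totally disconnected compact metric spaces is residual in the Gromov-Hausdorff space. -/
/-!
A metric space is totally disconnected as soon as, for every `ε > 0`, there is a `δ > 0` such
that points joined by a `δ`-chain are `ε`-close, because a connected set is `δ`-chain connected
for every `δ > 0`. For fixed `ε`, this property with a margin of `δ` (distances `≤ ε - δ`) is open
in the Gromov-Hausdorff metric, since an `η`-approximation between two spaces carries `δ`-chains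
to `(δ + 2η)`-chains. It holds in every finite space, and finite spaces are dense. Intersecting
over `ε = 1/(n+1)` gives a countable intersection of dense open sets.
-/

open GromovHausdorff Metric Set Relation

namespace Metric

variable {X Y : Type*} [MetricSpace X] [MetricSpace Y]

def JoinedByChain (δ : ℝ) : X → X → Prop :=
  ReflTransGen fun a b => dist a b ≤ δ

namespace JoinedByChain

theorem mono {δ δ' : ℝ} (h : δ ≤ δ') {x y : X} (hxy : JoinedByChain δ x y) :
    JoinedByChain δ' x y :=
  ReflTransGen.mono (fun _ _ (hab : dist _ _ ≤ δ) => hab.trans h) _ _ hxy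

theorem symm {δ : ℝ} {x y : X} (hxy : JoinedByChain δ x y) : JoinedByChain δ y x :=
  ReflTransGen.mono (fun a b (hab : dist b a ≤ δ) => (dist_comm a b).trans_le hab) _ _ hxy.swap

theorem map {f : Y → X} {c : ℝ} (hf : ∀ a b, dist (f a) (f b) ≤ dist a b + c) {δ : ℝ} {x y : Y}
    (hxy : JoinedByChain δ x y) : JoinedByChain (δ + c) (f x) (f y) :=
  ReflTransGen.lift f (fun a b (hab : dist a b ≤ δ) => by linarith [hf a b]) _ _ hxy

theorem eq_of_forall_dist_le {δ : ℝ} (hδ : ∀ a b : X, dist a b ≤ δ → a = b) {x y : X}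
    (hxy : JoinedByChain δ x y) : x = y := by
  induction hxy with
  | refl => rfl
  | tail _ hbc ih => exact ih.trans (hδ _ _ hbc)

end JoinedByChain

theorem _root_.IsPreconnected.joinedByChain {s : Set X} (hs : IsPreconnected s) {x y : X}
    (hx : x ∈ s) (hy : y ∈ s) {δ : ℝ} (hδ : 0 < δ) : JoinedByChain δ x y :=
  hs.induction₂ (JoinedByChain δ)
    (fun a _ => mem_nhdsWithin_of_mem_nhds <| Filter.mem_of_superset (ball_mem_nhds a hδ)
      fun _ hb => ReflTransGen.single (mem_ball'.1 hb).le)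
    (fun _ _ _ _ _ _ => ReflTransGen.trans) (fun _ _ _ _ => JoinedByChain.symm) hx hy

theorem exists_pos_forall_joinedByChain_eq [DiscreteUniformity X] :
    ∃ δ > 0, ∀ x y : X, JoinedByChain δ x y → x = y := by
  obtain ⟨ε, hε, hid⟩ := mem_uniformity_dist.1 (DiscreteUniformity.relId_mem_uniformity X)
  exact ⟨ε / 2, half_pos hε, fun x y => JoinedByChain.eq_of_forall_dist_le
    fun a b hab => hid (hab.trans_lt (half_lt_self hε))⟩

theorem totallyDisconnectedSpace_of_joinedByChain
    (h : ∀ ε > 0, ∃ δ > 0, ∀ x y : X, JoinedByChain δ x y → dist x y ≤ ε) :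
    TotallyDisconnectedSpace X :=
  ⟨fun _ _ ht _ hx _ hy => eq_of_forall_dist_le fun ε hε => by
    obtain ⟨δ, hδ, hchain⟩ := h ε hε
    exact hchain _ _ (ht.joinedByChain hx hy hδ)⟩

end Metric

namespace GromovHausdorff

variable {X Y : Type*} [MetricSpace X] [CompactSpace X] [Nonempty X]
  [MetricSpace Y] [CompactSpace Y] [Nonempty Y]

theorem exists_abs_dist_sub_le_of_ghDist_lt {η : ℝ} (h : ghDist X Y < η) :
    ∃ f : Y → X, ∀ a b, |dist (f a) (f b) - dist a b| ≤ 2 * η := by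
  set Φ := optimalGHInjl X Y
  set Ψ := optimalGHInjr X Y
  have hΦ : Isometry Φ := isometry_optimalGHInjl X Y
  have hΨ : Isometry Ψ := isometry_optimalGHInjr X Y
  have hne : hausdorffEDist (range Φ) (range Ψ) ≠ ⊤ :=
    hausdorffEDist_ne_top_of_nonempty_of_bounded (range_nonempty _) (range_nonempty _)
      (isCompact_range hΦ.continuous).isBounded (isCompact_range hΨ.continuous).isBounded
  have hclose : ∀ b : Y, ∃ a : X, dist (Φ a) (Ψ b) < η := fun b => by
    obtain ⟨_, ⟨a, rfl⟩, ha⟩ := exists_dist_lt_of_hausdorffDist_lt' (mem_range_self b)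
      (hausdorffDist_optimal.trans_lt h) hne
    exact ⟨a, ha⟩
  choose f hf using hclose
  refine ⟨f, fun a b => ?_⟩
  calc |dist (f a) (f b) - dist a b| = dist (dist (Φ (f a)) (Φ (f b))) (dist (Ψ a) (Ψ b)) := by
        rw [hΦ.dist_eq, hΨ.dist_eq, Real.dist_eq]
    _ ≤ dist (Φ (f a)) (Ψ a) + dist (Φ (f b)) (Ψ b) := dist_dist_dist_le _ _ _ _
    _ ≤ 2 * η := by linarith [hf a, hf b]

theorem finite_rep_toGHSpace [Finite X] : Finite (toGHSpace X).Rep := by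
  obtain ⟨e⟩ := toGHSpace_eq_toGHSpace_iff_isometryEquiv.1 (toGHSpace X).toGHSpace_rep
  exact Finite.of_equiv X e.toEquiv.symm

theorem dense_setOf_finite_rep : Dense {p : GHSpace | Finite p.Rep} := by
  refine Metric.dense_iff.2 fun p r hr => ?_
  obtain ⟨s, -, hsfin, hs⟩ := finite_approx_of_totallyBounded
    (isCompact_univ (X := p.Rep)).totallyBounded (r / 2) (half_pos hr)
  have hnet : ∀ x : p.Rep, ∃ y ∈ s, dist x y < r / 2 := fun x => by simpa using hs (mem_univ x)
  have : Finite s := hsfin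
  have : Nonempty s := let ⟨y, hy, _⟩ := hnet (Classical.arbitrary _); ⟨⟨y, hy⟩⟩
  refine ⟨toGHSpace s, ?_, finite_rep_toGHSpace⟩
  have hH : hausdorffDist (range ((↑) : s → p.Rep)) (range id) ≤ r / 2 := by
    rw [Subtype.range_coe, range_id]
    refine hausdorffDist_le_of_mem_dist (half_pos hr).le
      (fun x _ => ⟨x, mem_univ x, by rw [dist_self]; positivity⟩) fun x _ => ?_
    obtain ⟨y, hy, hxy⟩ := hnet x
    exact ⟨y, hy, hxy.le⟩
  calc dist (toGHSpace s) p = ghDist s p.Rep := by rw [ghDist, p.toGHSpace_rep]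
    _ ≤ r / 2 := (ghDist_le_hausdorffDist isometry_subtype_coe isometry_id).trans hH
    _ < r := half_lt_self hr

def smallChainComponents (ε : ℝ) : Set GHSpace :=
  {p | ∃ δ > 0, ∀ x y : p.Rep, JoinedByChain δ x y → dist x y ≤ ε - δ}

theorem isOpen_smallChainComponents (ε : ℝ) : IsOpen (smallChainComponents ε) := by
  refine isOpen_iff.2 fun p ⟨δ, hδ, hp⟩ => ⟨δ / 4, by positivity, fun q hq => ?_⟩
  rw [mem_ball', dist_ghDist] at hq
  obtain ⟨f, hf⟩ := exists_abs_dist_sub_le_of_ghDist_lt hq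
  have hf' := fun a b => abs_le.1 (hf a b)
  refine ⟨δ / 2, half_pos hδ, fun x y hxy => ?_⟩
  have hchain := hxy.map (f := f) (c := δ / 2) fun a b => by linarith [(hf' a b).2]
  rw [add_halves] at hchain
  linarith [hp _ _ hchain, (hf' x y).1]

theorem mem_smallChainComponents_of_finite {p : GHSpace} [Finite p.Rep] {ε : ℝ} (hε : 0 < ε) :
    p ∈ smallChainComponents ε := by
  obtain ⟨δ, hδ, hp⟩ := exists_pos_forall_joinedByChain_eq (X := p.Rep)
  refine ⟨min δ ε, lt_min hδ hε, fun x y hxy => ?_⟩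
  rw [hp x y (hxy.mono (min_le_left δ ε)), dist_self, sub_nonneg]
  exact min_le_right δ ε

theorem dense_smallChainComponents {ε : ℝ} (hε : 0 < ε) : Dense (smallChainComponents ε) :=
  dense_setOf_finite_rep.mono fun _ (_ : Finite _) => mem_smallChainComponents_of_finite hε

end GromovHausdorff

/-- A generic compact metric space is totally disconnected. -/
theorem residual_totallyDisconnected :
    {p : GHSpace | TotallyDisconnectedSpace p.Rep} ∈ residual GHSpace := by
  have hres : (⋂ n : ℕ, smallChainComponents (1 / (n + 1))) ∈ residual GHSpace :=
    countable_iInter_mem.2 fun n =>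
      residual_of_dense_open (isOpen_smallChainComponents _)
        (dense_smallChainComponents (by positivity))
  refine Filter.mem_of_superset hres fun p hp =>
    totallyDisconnectedSpace_of_joinedByChain fun ε hε => ?_
  obtain ⟨n, hn⟩ := exists_nat_one_div_lt hε
  obtain ⟨δ, hδ, hp⟩ := mem_iInter.1 hp n
  exact ⟨δ, hδ, fun x y hxy => by linarith [hp x y hxy]⟩
end

section
/- For each n ∈ ℕ, the set of compact metric spaces admitting a connected component of diameter at least 1/n is closed in the Gromov-Hausdorff space. -/
/-!
In a compact metric space, `y` and `z` lie in one connected component iff for every `ε > 0` they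
are joined by an `ε`-chain. Unlike connectedness, `ε`-chains survive Gromov-Hausdorff
approximation: a map with additive distortion `2r` turns an `ε`-chain into an `(ε + 2r)`-chain.
So if `X` has a component of diameter `≥ c` and `Y` is GH-close to `X`, then `Y` contains two
points at distance almost `c` joined by a fine chain; letting the precision go to zero and using
compactness of `Y`, a cluster point of such pairs lies in a single component of diameter `≥ c`.
-/

open GromovHausdorff Metric Filter Topology Set

section ChainConnected

variable {X Y : Type*} [PseudoMetricSpace X] [PseudoMetricSpace Y]

def ChainConnected (ε : ℝ) : X → X → Prop :=
  Relation.ReflTransGen fun u v => dist u v ≤ ε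

namespace ChainConnected

variable {ε δ : ℝ} {x y z : X}

theorem single (h : dist x y ≤ ε) : ChainConnected ε x y :=
  Relation.ReflTransGen.single h

theorem trans (hxy : ChainConnected ε x y) (hyz : ChainConnected ε y z) :
    ChainConnected ε x z :=
  Relation.ReflTransGen.trans hxy hyz

theorem symm (h : ChainConnected ε x y) : ChainConnected ε y x := by
  have : Std.Symm fun u v : X => dist u v ≤ ε := ⟨fun u v h => by rwa [dist_comm]⟩
  exact Relation.ReflTransGen.stdSymm.symm _ _ h

theorem mono (hεδ : ε ≤ δ) (h : ChainConnected ε x y) : ChainConnected δ x y :=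
  Relation.ReflTransGen.mono (fun _ _ huv => huv.trans hεδ) _ _ h

theorem map {f : X → Y} {D : ℝ} (hf : ∀ a b, dist (f a) (f b) ≤ dist a b + D)
    (h : ChainConnected ε x y) : ChainConnected (ε + D) (f x) (f y) := by
  induction h with
  | refl => exact Relation.ReflTransGen.refl
  | tail _ hstep ih => exact ih.tail ((hf _ _).trans (by linarith))

end ChainConnected

theorem IsPreconnected.chainConnected {C : Set X} (hC : IsPreconnected C) {a b : X} (ha : a ∈ C)
    (hb : b ∈ C) {ε : ℝ} (hε : 0 < ε) : ChainConnected ε a b := by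
  refine hC.induction₂ (ChainConnected ε) (fun x _ => ?_)
    (fun _ _ _ _ _ _ => ChainConnected.trans) (fun _ _ _ _ => ChainConnected.symm) ha hb
  filter_upwards [nhdsWithin_le_nhds (ball_mem_nhds x hε)] with y hy
  exact .single (mem_ball'.1 hy).le

end ChainConnected

theorem Metric.exists_lt_dist_of_le_diam {X : Type*} [PseudoMetricSpace X] {s : Set X}
    (hs : s.Nonempty) {c ε : ℝ} (hc : c ≤ diam s) (hε : 0 < ε) :
    ∃ a ∈ s, ∃ b ∈ s, c - ε < dist a b := by
  by_contra! hsmall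
  obtain ⟨a, ha⟩ := hs
  have hnonneg : 0 ≤ c - ε := (dist_self a).symm.le.trans (hsmall a ha a ha)
  linarith [diam_le_of_forall_dist_le hnonneg hsmall]

theorem mem_connectedComponent_of_forall_chainConnected {Y : Type*} [MetricSpace Y]
    [CompactSpace Y] {y z : Y} (h : ∀ ε > 0, ChainConnected ε y z) :
    z ∈ connectedComponent y := by
  rw [connectedComponent_eq_iInter_isClopen]
  refine mem_iInter.2 fun ⟨U, hU, hyU⟩ => ?_
  -- some thickening of the clopen set `U` stays in `U`, so a fine chain cannot leave `U`
  obtain ⟨δ, hδ, hthick⟩ :=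
    hU.isClosed.isCompact.exists_thickening_subset_open hU.isOpen subset_rfl
  have hstays : ∀ {u v : Y}, ChainConnected (δ / 2) u v → u ∈ U → v ∈ U := by
    intro u v huv hu
    induction huv with
    | refl => exact hu
    | tail _ hstep ih =>
      exact hthick (mem_thickening_iff.2 ⟨_, ih, by rw [dist_comm]; linarith⟩)
  exact hstays (h (δ / 2) (half_pos hδ)) hyU

theorem exists_le_diam_connectedComponent_of_forall_chainConnected {Y : Type*}
    [MetricSpace Y] [CompactSpace Y] {c : ℝ}
    (h : ∀ ε > 0, ∃ y z : Y, c - ε ≤ dist y z ∧ ChainConnected ε y z) :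
    ∃ y : Y, c ≤ diam (connectedComponent y) := by
  choose y z hdist hchain using fun k : ℕ => h (1 / (k + 1)) Nat.one_div_pos_of_nat
  obtain ⟨⟨y₀, z₀⟩, -, hcluster⟩ :=
    isCompact_univ.exists_mapClusterPt (f := atTop) (u := fun k => (y k, z k)) (by simp)
  have hnear : ∀ δ > 0,
      ∃ k : ℕ, 1 / ((k : ℝ) + 1) ≤ δ ∧ dist (y k) y₀ < δ ∧ dist (z k) z₀ < δ := by
    intro δ hδ
    have hfreq := mapClusterPt_iff_frequently.1 hcluster _ (ball_mem_nhds _ hδ)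
    obtain ⟨k, hk, hkδ⟩ := (hfreq.and_eventually
      (tendsto_one_div_add_atTop_nhds_zero_nat.eventually (eventually_le_nhds hδ))).exists
    rw [mem_ball, Prod.dist_eq, max_lt_iff] at hk
    exact ⟨k, hkδ, hk⟩
  have hfar : c ≤ dist y₀ z₀ := by
    refine le_of_forall_pos_lt_add fun δ hδ => ?_
    obtain ⟨k, hkδ, hy, hz⟩ := hnear (δ / 3) (by positivity)
    linarith [hdist k, dist_triangle4 (y k) y₀ z₀ (z k), dist_comm (z k) z₀]
  have hz₀ : z₀ ∈ connectedComponent y₀ := by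
    refine mem_connectedComponent_of_forall_chainConnected fun δ hδ => ?_
    obtain ⟨k, hkδ, hy, hz⟩ := hnear δ hδ
    rw [dist_comm] at hy
    exact ((ChainConnected.single hy.le).trans ((hchain k).mono hkδ)).trans (.single hz.le)
  exact ⟨y₀, hfar.trans
    (dist_le_diam_of_mem isBounded_of_compactSpace mem_connectedComponent hz₀)⟩

theorem GromovHausdorff.exists_abs_dist_sub_le_of_ghDist_lt_s8 {X Y : Type*} [MetricSpace X]
    [CompactSpace X] [Nonempty X] [MetricSpace Y] [CompactSpace Y] [Nonempty Y] {r : ℝ}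
    (h : ghDist X Y < r) : ∃ f : X → Y, ∀ a b, |dist (f a) (f b) - dist a b| ≤ 2 * r := by
  set ι := optimalGHInjl X Y
  set κ := optimalGHInjr X Y
  have hι : Isometry ι := isometry_optimalGHInjl X Y
  have hκ : Isometry κ := isometry_optimalGHInjr X Y
  have hfinite := hausdorffEDist_ne_top_of_nonempty_of_bounded (range_nonempty ι)
    (range_nonempty κ) (isCompact_range hι.continuous).isBounded
    (isCompact_range hκ.continuous).isBounded
  have hclose : ∀ u : X, ∃ v : Y, dist (κ v) (ι u) < r := by
    intro u
    obtain ⟨_, ⟨v, rfl⟩, hv⟩ := exists_dist_lt_of_hausdorffDist_lt (mem_range_self u)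
      (hausdorffDist_optimal.trans_lt h) hfinite
    exact ⟨v, by rwa [dist_comm]⟩
  choose f hf using hclose
  refine ⟨f, fun a b => ?_⟩
  calc |dist (f a) (f b) - dist a b| = dist (dist (κ (f a)) (κ (f b))) (dist (ι a) (ι b)) := by
        rw [hκ.dist_eq, hι.dist_eq, Real.dist_eq]
    _ ≤ dist (κ (f a)) (ι a) + dist (κ (f b)) (ι b) := dist_dist_dist_le _ _ _ _
    _ ≤ 2 * r := by linarith [hf a, hf b]

theorem GromovHausdorff.exists_chainConnected_of_ghDist_lt {X Y : Type*} [MetricSpace X]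
    [CompactSpace X] [Nonempty X] [MetricSpace Y] [CompactSpace Y] [Nonempty Y] {x : X}
    {c r ε : ℝ} (hc : c ≤ diam (connectedComponent x)) (hr : ghDist X Y < r) (hε : 0 < ε) :
    ∃ y z : Y, c - ε - 2 * r ≤ dist y z ∧ ChainConnected (ε + 2 * r) y z := by
  obtain ⟨f, hf⟩ := exists_abs_dist_sub_le_of_ghDist_lt_s8 hr
  obtain ⟨a, ha, b, hb, hab⟩ := exists_lt_dist_of_le_diam ⟨x, mem_connectedComponent⟩ hc hε
  refine ⟨f a, f b, by linarith [(abs_le.1 (hf a b)).1], ?_⟩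
  exact (isPreconnected_connectedComponent.chainConnected ha hb hε).map
    fun u v => by linarith [(abs_le.1 (hf u v)).2]

/-- For each `n`, the set of compact metric spaces admitting a connected component of
diameter at least `1/n` is closed in the Gromov-Hausdorff space. -/
theorem isClosed_large_component (n : ℕ) :
    IsClosed {p : GHSpace | ∃ x : p.Rep, 1 / (n : ℝ) ≤ Metric.diam (connectedComponent x)} := by
  refine isClosed_of_closure_subset fun q hq => ?_
  refine exists_le_diam_connectedComponent_of_forall_chainConnected fun ε hε => ?_
  obtain ⟨p, ⟨x, hx⟩, hpq⟩ := mem_closure_iff.1 hq (ε / 4) (by positivity)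
  rw [dist_comm, dist_ghDist] at hpq
  obtain ⟨y, z, hyz, hchain⟩ := exists_chainConnected_of_ghDist_lt hx hpq (half_pos hε)
  exact ⟨y, z, by linarith, hchain.mono (by linarith)⟩
end

section
/- A generic compact metric space is totally anisometric; that is, the set of compact metric spaces in which two distinct pairs of points always have distinct distances is residual in the Gromov-Hausdorff space. -/
/-!
Call `AnisometricGap X a ε` the property that pairs of points at least `a` apart, and at least `a`
away from each other in either matching of their endpoints, have lengths differing by at least
`ε`. It survives a Gromov–Hausdorff perturbation of size `η` with `4η` lost in both parameters,
so the spaces lying within `ε / 8` of a space with gap `ε` at scale `a` form an open set. It is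
dense because finite totally anisometric spaces are dense: a finite `δ`-net `F` of a compact
space is pushed into the `ℓ¹`-product with `ℝ` as `i ↦ (F i, c * 2 ^ e i)`; differences of
distinct powers of two are distinct, so all but finitely many `c` separate all distances. A space
lying in these open sets at every scale `1 / (n + 1)` has a gap at every scale, hence is totally
anisometric.
-/

open GromovHausdorff

open Metric Set Filter Topology

def AnisometricGap (X : Type*) [PseudoMetricSpace X] (a ε : ℝ) : Prop :=
  ∀ x y x' y' : X, a ≤ dist x y → a ≤ dist x x' + dist y y' → a ≤ dist x y' + dist y x' →
    ε ≤ |dist x y - dist x' y'|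

section AnisometricGap

variable {X : Type*}

theorem AnisometricGap.mono [PseudoMetricSpace X] {a a' ε ε' : ℝ} (h : AnisometricGap X a ε)
    (ha : a ≤ a') (hε : ε' ≤ ε) : AnisometricGap X a' ε' :=
  fun x y x' y' h₁ h₂ h₃ => hε.trans (h x y x' y' (ha.trans h₁) (ha.trans h₂) (ha.trans h₃))

theorem TotallyAnisometric.congr [MetricSpace X] {Y : Type*} [MetricSpace Y] (e : X ≃ᵢ Y)
    (h : TotallyAnisometric X) : TotallyAnisometric Y := by
  intro x y x' y' heq hpos
  have := h (e.symm x) (e.symm y) (e.symm x') (e.symm y')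
    (by simp only [e.symm.dist_eq]; exact heq) (by rwa [e.symm.dist_eq])
  simpa only [e.symm.injective.eq_iff] using this

theorem totallyAnisometric_of_forall_anisometricGap [MetricSpace X]
    (h : ∀ a > 0, ∃ ε > 0, AnisometricGap X a ε) : TotallyAnisometric X := by
  have hsum : ∀ {u v u' v' : X}, ¬(u = u' ∧ v = v') → 0 < dist u u' + dist v v' := by
    intro u v u' v' huv
    by_contra! h0
    exact huv ⟨dist_le_zero.1 (by linarith [dist_nonneg (x := v) (y := v')]),
      dist_le_zero.1 (by linarith [dist_nonneg (x := u) (y := u')])⟩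
  intro x y x' y' heq hpos
  by_contra hne
  rw [not_or] at hne
  obtain ⟨ε, hε, hgap⟩ := h _ (lt_min hpos (lt_min (hsum hne.1) (hsum hne.2)))
  have := hgap x y x' y' (min_le_left _ _) ((min_le_right _ _).trans (min_le_left _ _))
    ((min_le_right _ _).trans (min_le_right _ _))
  rw [heq, sub_self, abs_zero] at this
  linarith

theorem TotallyAnisometric.exists_anisometricGap [MetricSpace X] [Finite X]
    (hX : TotallyAnisometric X) {a : ℝ} (ha : 0 < a) : ∃ ε > 0, AnisometricGap X a ε := by
  have hpos : ∀ x y x' y' : X, a ≤ dist x y → a ≤ dist x x' + dist y y' →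
      a ≤ dist x y' + dist y x' → 0 < |dist x y - dist x' y'| := by
    intro x y x' y' h₁ h₂ h₃
    refine abs_pos.2 (sub_ne_zero.2 fun heq => ?_)
    rcases hX x y x' y' heq (ha.trans_le h₁) with ⟨rfl, rfl⟩ | ⟨rfl, rfl⟩ <;>
      simp only [dist_self, add_zero] at h₂ h₃ <;> linarith
  have hev : ∀ᶠ ε in 𝓝[>] (0 : ℝ), AnisometricGap X a ε := by
    simp only [AnisometricGap, eventually_all]
    intro x y x' y' h₁ h₂ h₃
    exact (eventually_le_nhds (hpos x y x' y' h₁ h₂ h₃)).filter_mono nhdsWithin_le_nhds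
  exact (hev.and self_mem_nhdsWithin).exists.imp fun ε h => ⟨h.2, h.1⟩

end AnisometricGap

section GromovHausdorff

variable {X Y : Type*} [MetricSpace X] [CompactSpace X] [Nonempty X]
  [MetricSpace Y] [CompactSpace Y] [Nonempty Y]

theorem exists_abs_dist_sub_lt_of_ghDist_lt {η : ℝ} (h : ghDist X Y < η) :
    ∃ f : Y → X, ∀ y y', |dist (f y) (f y') - dist y y'| < 2 * η := by
  obtain ⟨Φ, Ψ, hΦ, hΨ, hd⟩ := ghDist_eq_hausdorffDist X Y
  have hfin : hausdorffEDist (range Φ) (range Ψ) ≠ ⊤ :=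
    hausdorffEDist_ne_top_of_nonempty_of_bounded (range_nonempty _) (range_nonempty _)
      (isCompact_range hΦ.continuous).isBounded (isCompact_range hΨ.continuous).isBounded
  have : ∀ y, ∃ x, dist (Φ x) (Ψ y) < η := fun y => by
    obtain ⟨_, ⟨x, rfl⟩, hx⟩ := exists_dist_lt_of_hausdorffDist_lt' (mem_range_self y) (hd ▸ h) hfin
    exact ⟨x, hx⟩
  choose f hf using this
  refine ⟨f, fun y y' => ?_⟩
  calc |dist (f y) (f y') - dist y y'| = dist (dist (Φ (f y)) (Φ (f y'))) (dist (Ψ y) (Ψ y')) := by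
        rw [hΦ.dist_eq, hΨ.dist_eq, Real.dist_eq]
    _ ≤ dist (Φ (f y)) (Ψ y) + dist (Φ (f y')) (Ψ y') := dist_dist_dist_le _ _ _ _
    _ < 2 * η := by linarith [hf y, hf y']

theorem AnisometricGap.of_ghDist_lt {a ε η : ℝ} (h : AnisometricGap X a ε)
    (hXY : ghDist X Y < η) : AnisometricGap Y (a + 4 * η) (ε - 4 * η) := by
  obtain ⟨f, hf⟩ := exists_abs_dist_sub_lt_of_ghDist_lt hXY
  have hf' := fun u v => abs_sub_lt_iff.1 (hf u v)
  intro y₁ y₂ y₁' y₂' h₁ h₂ h₃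
  have hgap := h (f y₁) (f y₂) (f y₁') (f y₂') (by linarith [hf' y₁ y₂])
    (by linarith [hf' y₁ y₁', hf' y₂ y₂']) (by linarith [hf' y₁ y₂', hf' y₂ y₁'])
  have hdistort : |(dist (f y₁) (f y₂) - dist (f y₁') (f y₂')) - (dist y₁ y₂ - dist y₁' y₂')|
      < 4 * η :=
    abs_sub_lt_iff.2 ⟨by linarith [hf' y₁ y₂, hf' y₁' y₂'], by linarith [hf' y₁ y₂, hf' y₁' y₂']⟩
  linarith [abs_sub_abs_le_abs_sub (dist (f y₁) (f y₂) - dist (f y₁') (f y₂'))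
    (dist y₁ y₂ - dist y₁' y₂')]

end GromovHausdorff

theorem abs_two_pow_sub_two_pow (m n : ℕ) :
    |(2 : ℝ) ^ m - 2 ^ n| = 2 ^ max m n - 2 ^ min m n := by
  rcases le_total m n with h | h
  · rw [max_eq_right h, min_eq_left h, abs_sub_comm,
      abs_of_nonneg (sub_nonneg.2 (pow_le_pow_right₀ one_le_two h))]
  · rw [max_eq_left h, min_eq_right h,
      abs_of_nonneg (sub_nonneg.2 (pow_le_pow_right₀ one_le_two h))]

theorem two_pow_sub_two_pow_lt {i j i' j' : ℕ} (hij' : i' < j') (hjj' : j < j') :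
    (2 : ℝ) ^ j - 2 ^ i < 2 ^ j' - 2 ^ i' := by
  have h₁ : (2 : ℝ) ^ (j + 1) ≤ 2 ^ j' := pow_le_pow_right₀ one_le_two hjj'
  have h₂ : (2 : ℝ) ^ (i' + 1) ≤ 2 ^ j' := pow_le_pow_right₀ one_le_two hij'
  have : (0 : ℝ) < 2 ^ i := by positivity
  rw [pow_succ] at h₁ h₂
  linarith

theorem two_pow_sub_two_pow_injective {i j i' j' : ℕ} (hij : i < j) (hij' : i' < j')
    (h : (2 : ℝ) ^ j - 2 ^ i = 2 ^ j' - 2 ^ i') : i = i' ∧ j = j' := by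
  obtain rfl : j = j' := by
    rcases lt_trichotomy j j' with hlt | heq | hgt
    · exact absurd h (two_pow_sub_two_pow_lt hij' hlt).ne
    · exact heq
    · exact absurd h (two_pow_sub_two_pow_lt hij hgt).ne'
  exact ⟨pow_right_injective₀ two_pos (by norm_num) (show (2 : ℝ) ^ i = 2 ^ i' by linarith), rfl⟩

theorem abs_two_pow_sub_two_pow_inj {m n m' n' : ℕ} (hmn : m ≠ n)
    (h : |(2 : ℝ) ^ m - 2 ^ n| = |2 ^ m' - 2 ^ n'|) :
    (m = m' ∧ n = n') ∨ (m = n' ∧ n = m') := by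
  rcases eq_or_ne m' n' with rfl | hmn'
  · rw [sub_self, abs_zero, abs_eq_zero, sub_eq_zero] at h
    exact absurd (pow_right_injective₀ two_pos (by norm_num) h) hmn
  rw [abs_two_pow_sub_two_pow, abs_two_pow_sub_two_pow] at h
  obtain ⟨hmin, hmax⟩ := two_pow_sub_two_pow_injective (min_lt_max.2 hmn) (min_lt_max.2 hmn') h
  omega

theorem exists_abs_sub_inj (ι : Type*) [Finite ι] :
    ∃ t : ι → ℝ, ∀ i j i' j', i ≠ j → |t i - t j| = |t i' - t j'| →
      (i = i' ∧ j = j') ∨ (i = j' ∧ j = i') := by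
  obtain ⟨e, he⟩ := Countable.exists_injective_nat ι
  refine ⟨fun i => 2 ^ e i, fun i j i' j' hij h => ?_⟩
  simpa only [he.eq_iff] using abs_two_pow_sub_two_pow_inj (he.ne hij) h

theorem exists_mem_Ioo_add_mul_abs_sub_inj {ι : Type*} [Finite ι] (d : ι → ι → ℝ) {t : ι → ℝ}
    (ht : ∀ i j i' j', i ≠ j → |t i - t j| = |t i' - t j'| →
      (i = i' ∧ j = j') ∨ (i = j' ∧ j = i'))
    {η : ℝ} (hη : 0 < η) :
    ∃ c ∈ Ioo 0 η, ∀ i j i' j', i ≠ j → d i j + c * |t i - t j| = d i' j' + c * |t i' - t j'| →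
      (i = i' ∧ j = j') ∨ (i = j' ∧ j = i') := by
  let root : ι × ι × ι × ι → ℝ := fun ⟨i, j, i', j'⟩ =>
    (d i' j' - d i j) / (|t i - t j| - |t i' - t j'|)
  obtain ⟨c, hc, hroot⟩ := ((Ioo_infinite hη).sdiff (finite_range root)).nonempty
  refine ⟨c, hc, fun i j i' j' hij h => ?_⟩
  by_contra hne
  have hdt : |t i - t j| - |t i' - t j'| ≠ 0 := sub_ne_zero.2 fun h' => hne (ht i j i' j' hij h')
  exact hroot ⟨(i, j, i', j'), by simp only [root]; rw [div_eq_iff hdt]; linarith⟩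

theorem WithLp.dist_toLp_one_prod {α β : Type*} [PseudoMetricSpace α] [PseudoMetricSpace β]
    (x x' : α) (y y' : β) :
    dist (WithLp.toLp 1 (x, y)) (WithLp.toLp 1 (x', y')) = dist x x' + dist y y' := by
  rw [WithLp.prod_dist_eq_add (by simp)]
  simp

theorem ghDist_range_toLp_le {X ι : Type*} [MetricSpace X] [CompactSpace X] [Nonempty X]
    [Finite ι] [Nonempty ι] {F : ι → X} {g : ι → ℝ} {δ : ℝ}
    (hF : ∀ x, ∃ i, dist x (F i) ≤ δ) (hg : ∀ i, |g i| ≤ δ) :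
    ghDist X (range fun i => WithLp.toLp 1 (F i, g i)) ≤ 2 * δ := by
  have hdist : ∀ x i, dist (WithLp.toLp 1 (x, (0 : ℝ))) (WithLp.toLp 1 (F i, g i)) =
      dist x (F i) + |g i| := fun x i => by
    rw [WithLp.dist_toLp_one_prod, Real.dist_eq, zero_sub, abs_neg]
  have hδ : 0 ≤ δ := (abs_nonneg _).trans (hg (Classical.arbitrary ι))
  refine (ghDist_le_hausdorffDist (Φ := fun x : X => WithLp.toLp 1 (x, (0 : ℝ)))
    (Isometry.of_dist_eq fun x y => by rw [WithLp.dist_toLp_one_prod, dist_self, add_zero])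
    isometry_subtype_coe).trans ?_
  rw [Subtype.range_coe]
  refine hausdorffDist_le_of_mem_dist (by positivity) ?_ ?_
  · rintro _ ⟨x, rfl⟩
    obtain ⟨i, hi⟩ := hF x
    exact ⟨_, mem_range_self i, by rw [hdist]; linarith [hg i]⟩
  · rintro _ ⟨i, rfl⟩
    exact ⟨_, mem_range_self (F i), by rw [dist_comm, hdist, dist_self]; linarith [hg i]⟩

theorem totallyAnisometric_range {Z ι : Type*} [MetricSpace Z] {f : ι → Z}
    (hf : ∀ i j i' j', i ≠ j → dist (f i) (f j) = dist (f i') (f j') →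
      (i = i' ∧ j = j') ∨ (i = j' ∧ j = i')) :
    TotallyAnisometric (range f) := by
  rintro ⟨_, i, rfl⟩ ⟨_, j, rfl⟩ ⟨_, i', rfl⟩ ⟨_, j', rfl⟩ heq hpos
  have hij : i ≠ j := by
    rintro rfl
    simp at hpos
  rcases hf i j i' j' hij heq with ⟨rfl, rfl⟩ | ⟨rfl, rfl⟩ <;> simp

theorem exists_totallyAnisometric_range_toLp {X ι : Type*} [MetricSpace X] [Finite ι]
    (F : ι → X) {δ : ℝ} (hδ : 0 < δ) :
    ∃ g : ι → ℝ, (∀ i, |g i| ≤ δ) ∧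
      TotallyAnisometric (range fun i => WithLp.toLp 1 (F i, g i)) := by
  obtain ⟨t, ht⟩ := exists_abs_sub_inj ι
  obtain ⟨M, hM⟩ := Finite.bddAbove_range fun i => |t i|
  obtain ⟨c, ⟨hc, hcM⟩, hct⟩ := exists_mem_Ioo_add_mul_abs_sub_inj (fun i j => dist (F i) (F j))
    ht (η := δ / (|M| + 1)) (by positivity)
  refine ⟨fun i => c * t i, fun i => ?_, totallyAnisometric_range fun i j i' j' hij h =>
    hct i j i' j' hij ?_⟩
  · have hti : |t i| ≤ |M| + 1 := by linarith [hM (mem_range_self i), le_abs_self M]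
    rw [lt_div_iff₀ (by positivity)] at hcM
    rw [abs_mul, abs_of_pos hc]
    nlinarith
  · simpa only [WithLp.dist_toLp_one_prod, Real.dist_eq, ← mul_sub, abs_mul, abs_of_pos hc]
      using h

theorem dense_setOf_finite_totallyAnisometric :
    Dense {p : GHSpace | Finite p.Rep ∧ TotallyAnisometric p.Rep} := by
  refine Metric.dense_iff.2 fun q r hr => ?_
  obtain ⟨s, -, hs, hcover⟩ :=
    finite_cover_balls_of_compact (isCompact_univ (X := q.Rep)) (div_pos hr three_pos)
  have : Finite s := hs.to_subtype
  have hnet : ∀ x : q.Rep, ∃ i : s, dist x i ≤ r / 3 := fun x => by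
    obtain ⟨y, hy, hxy⟩ := mem_iUnion₂.1 (hcover (mem_univ x))
    exact ⟨⟨y, hy⟩, (mem_ball.1 hxy).le⟩
  have : Nonempty s := (hnet (Classical.arbitrary _)).nonempty
  obtain ⟨g, hg, hY⟩ :=
    exists_totallyAnisometric_range_toLp ((↑) : s → q.Rep) (div_pos hr three_pos)
  set Y := range fun i : s => WithLp.toLp 1 ((i : q.Rep), g i)
  obtain ⟨e⟩ := toGHSpace_eq_toGHSpace_iff_isometryEquiv.1 (GHSpace.toGHSpace_rep (toGHSpace Y))
  refine ⟨toGHSpace Y, ?_, Finite.of_equiv _ e.toEquiv.symm, hY.congr e.symm⟩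
  rw [mem_ball, dist_comm]
  calc dist q (toGHSpace Y) = ghDist q.Rep Y :=
        (congrArg (dist · (toGHSpace Y)) q.toGHSpace_rep).symm
    _ ≤ 2 * (r / 3) := ghDist_range_toLp_le hnet hg
    _ < r := by linarith

def anisometricNbhd (a : ℝ) : Set GHSpace :=
  ⋃ (p : GHSpace) (ε : ℝ) (_ : 0 < ε ∧ ε ≤ a ∧ AnisometricGap p.Rep a ε), ball p (ε / 8)

theorem isOpen_anisometricNbhd (a : ℝ) : IsOpen (anisometricNbhd a) :=
  isOpen_iUnion fun _ => isOpen_iUnion fun _ => isOpen_iUnion fun _ => isOpen_ball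

theorem dense_anisometricNbhd {a : ℝ} (ha : 0 < a) : Dense (anisometricNbhd a) := by
  refine dense_setOf_finite_totallyAnisometric.mono ?_
  rintro p ⟨hfin, hp⟩
  obtain ⟨ε, hε, hgap⟩ := hp.exists_anisometricGap ha
  exact mem_iUnion₂.2 ⟨p, min ε a, mem_iUnion.2 ⟨⟨lt_min hε ha, min_le_right _ _,
    hgap.mono le_rfl (min_le_left _ _)⟩, mem_ball_self (by positivity)⟩⟩

theorem exists_anisometricGap_of_mem_anisometricNbhd {a : ℝ} {q : GHSpace}
    (hq : q ∈ anisometricNbhd a) : ∃ ε > 0, AnisometricGap q.Rep (2 * a) ε := by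
  simp only [anisometricNbhd, mem_iUnion, mem_ball] at hq
  obtain ⟨p, ε, ⟨hε, hεa, hgap⟩, hpq⟩ := hq
  rw [dist_comm, dist_ghDist] at hpq
  exact ⟨ε / 2, by positivity, (hgap.of_ghDist_lt hpq).mono (by linarith) (by linarith)⟩

/-- A generic compact metric space is totally anisometric. -/
theorem residual_totallyAnisometric :
    {p : GHSpace | TotallyAnisometric p.Rep} ∈ residual GHSpace := by
  have hU : ∀ n : ℕ, anisometricNbhd (1 / (n + 1)) ∈ residual GHSpace := fun n =>
    residual_of_dense_open (isOpen_anisometricNbhd _) (dense_anisometricNbhd (by positivity))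
  refine mem_of_superset (countable_iInter_mem.2 hU) fun q hq => ?_
  refine totallyAnisometric_of_forall_anisometricGap fun a ha => ?_
  obtain ⟨n, hn⟩ := exists_nat_one_div_lt (half_pos ha)
  obtain ⟨ε, hε, hgap⟩ := exists_anisometricGap_of_mem_anisometricNbhd (mem_iInter.1 hq n)
  exact ⟨ε, hε, hgap.mono (by linarith) le_rfl⟩
end

section
/- For each ε > 0, the set of compact metric spaces X containing points x, y, x', y' with d(x,y) = d(x',y') ≥ ε, d(x,x') + d(y,y') ≥ ε, and d(x,y') + d(x',y) ≥ ε is closed in the Gromov-Hausdorff space. -/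
/-!
Record a configuration `x : ι → X` of finitely many points by its matrix of pairwise
distances. This matrix depends `2`-Lipschitz on the configuration, so configurations in
Gromov-Hausdorff close spaces have close distance matrices, while the distance matrices
realised in a compact space form a compact set. A compact set disjoint from a closed set
`C` keeps a positive distance from it, so a space all of whose distance matrices avoid `C`
has a Gromov-Hausdorff neighbourhood whose spaces avoid `C` as well.
-/

open GromovHausdorff Metric Set

section DistMatrix

variable {ι X : Type*} [PseudoMetricSpace X]

def distMatrix (x : ι → X) : ι → ι → ℝ := fun i j => dist (x i) (x j)

theorem Isometry.distMatrix_comp {Z : Type*} [PseudoMetricSpace Z] {Φ : X → Z}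
    (hΦ : Isometry Φ) (x : ι → X) : distMatrix (Φ ∘ x) = distMatrix x := by
  ext i j
  exact hΦ.dist_eq (x i) (x j)

variable [Fintype ι]

theorem lipschitzWith_distMatrix : LipschitzWith 2 (distMatrix : (ι → X) → ι → ι → ℝ) := by
  refine LipschitzWith.of_dist_le_mul fun x y => ?_
  refine (dist_pi_le_iff (by positivity)).2 fun i =>
    (dist_pi_le_iff (by positivity)).2 fun j => ?_
  calc dist (dist (x i) (x j)) (dist (y i) (y j)) ≤ dist (x i) (y i) + dist (x j) (y j) :=
        dist_dist_dist_le _ _ _ _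
    _ ≤ dist x y + dist x y := add_le_add (dist_le_pi_dist x y i) (dist_le_pi_dist x y j)
    _ = (2 : NNReal) * dist x y := by push_cast; ring

theorem isCompact_range_distMatrix [CompactSpace X] :
    IsCompact (range (distMatrix : (ι → X) → ι → ι → ℝ)) :=
  isCompact_range lipschitzWith_distMatrix.continuous

end DistMatrix

theorem GromovHausdorff.exists_dist_distMatrix_lt {ι : Type*} [Fintype ι] {p q : GHSpace}
    {δ : ℝ} (hpq : dist p q < δ) (y : ι → q.Rep) :
    ∃ x : ι → p.Rep, dist (distMatrix x) (distMatrix y) < 2 * δ := by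
  obtain ⟨Φ, Ψ, hΦ, hΨ, hd⟩ := ghDist_eq_hausdorffDist p.Rep q.Rep
  have hδ : 0 < δ := dist_nonneg.trans_lt hpq
  have hH : hausdorffDist (range Φ) (range Ψ) < δ := by rwa [← hd, ← dist_ghDist]
  have hfin : hausdorffEDist (range Φ) (range Ψ) ≠ ⊤ :=
    hausdorffEDist_ne_top_of_nonempty_of_bounded (range_nonempty _) (range_nonempty _)
      (isCompact_range hΦ.continuous).isBounded (isCompact_range hΨ.continuous).isBounded
  have hclose : ∀ i, ∃ a : p.Rep, dist (Φ a) (Ψ (y i)) < δ := fun i => by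
    obtain ⟨-, ⟨a, rfl⟩, ha⟩ := exists_dist_lt_of_hausdorffDist_lt' (mem_range_self (y i)) hH hfin
    exact ⟨a, ha⟩
  choose x hx using hclose
  refine ⟨x, ?_⟩
  rw [← hΦ.distMatrix_comp, ← hΨ.distMatrix_comp]
  calc dist (distMatrix (Φ ∘ x)) (distMatrix (Ψ ∘ y)) ≤ 2 * dist (Φ ∘ x) (Ψ ∘ y) :=
        mod_cast lipschitzWith_distMatrix.dist_le_mul (Φ ∘ x) (Ψ ∘ y)
    _ < 2 * δ := by gcongr; exact (dist_pi_lt_iff hδ).2 hx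

theorem GromovHausdorff.isClosed_setOf_exists_distMatrix_mem {ι : Type*} [Fintype ι]
    {C : Set (ι → ι → ℝ)} (hC : IsClosed C) :
    IsClosed {p : GHSpace | ∃ x : ι → p.Rep, distMatrix x ∈ C} := by
  refine isClosed_of_closure_subset fun p hp => ?_
  by_contra hpC
  have hdisj : range (distMatrix : (ι → p.Rep) → ι → ι → ℝ) ⊆ Cᶜ := by
    rintro _ ⟨x, rfl⟩ hx
    exact hpC ⟨x, hx⟩
  obtain ⟨δ, hδ, hthick⟩ :=
    isCompact_range_distMatrix.exists_thickening_subset_open hC.isOpen_compl hdisj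
  obtain ⟨q, ⟨y, hy⟩, hpq⟩ := mem_closure_iff.1 hp (δ / 2) (half_pos hδ)
  obtain ⟨x, hx⟩ := exists_dist_distMatrix_lt hpq y
  refine hthick (mem_thickening_iff.2 ⟨_, mem_range_self x, ?_⟩) hy
  rw [dist_comm]
  linarith

theorem isClosed_anisometry_defect_general (ε : ℝ) :
    IsClosed {p : GHSpace | ∃ x y x' y' : p.Rep,
      dist x y = dist x' y' ∧ ε ≤ dist x y ∧
      ε ≤ dist x x' + dist y y' ∧ ε ≤ dist x y' + dist x' y} := by
  let C : Set (Fin 4 → Fin 4 → ℝ) := {D | D 0 1 = D 2 3 ∧ ε ≤ D 0 1 ∧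
      ε ≤ D 0 2 + D 1 3 ∧ ε ≤ D 0 3 + D 2 1}
  have hC : IsClosed C := by
    refine (isClosed_eq ?_ ?_).and ((isClosed_le ?_ ?_).and
      ((isClosed_le ?_ ?_).and (isClosed_le ?_ ?_))) <;> fun_prop
  convert isClosed_setOf_exists_distMatrix_mem hC using 3 with p
  constructor
  · rintro ⟨x, y, x', y', h⟩
    exact ⟨![x, y, x', y'], h⟩
  · rintro ⟨x, h⟩
    exact ⟨x 0, x 1, x 2, x 3, h⟩

/-- For each `ε > 0`, the set of compact metric spaces containing a configuration of points
`x, y, x', y'` with `d(x,y) = d(x',y') ≥ ε`, `d(x,x') + d(y,y') ≥ ε` and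
`d(x,y') + d(x',y) ≥ ε` is closed in the Gromov-Hausdorff space. -/
theorem isClosed_anisometry_defect (ε : ℝ) (hε : 0 < ε) :
    IsClosed {p : GHSpace | ∃ x y x' y' : p.Rep,
      dist x y = dist x' y' ∧ ε ≤ dist x y ∧
      ε ≤ dist x x' + dist y y' ∧ ε ≤ dist x y' + dist x' y} :=
  isClosed_anisometry_defect_general ε
end

section
/- A generic compact metric space is perfect; that is, the set of compact metric spaces without isolated points is residual in the Gromov-Hausdorff space. -/
/-!
Say that a compact space lies in `U ε` if every point has another point at distance `< ε`;
the perfect spaces are exactly `⋂ n, U (1 / (n + 1))`. Each `U ε` is open: by compactness the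
distances to the chosen partners can be taken in `(r, ε - r)` for a single `r > 0`, a margin
that survives a Gromov–Hausdorff perturbation of size `< r / 2`. Perfect spaces are dense, as
`X` is within `r / 2` of the perfect space `X × [0, r / 2]`. Hence they form a dense Gδ.
-/

open GromovHausdorff Metric Set Filter Topology

section EveryPointHasDistIn

variable {X : Type*} [MetricSpace X]

def EveryPointHasDistIn (s : Set X) (I : Set ℝ) : Prop :=
  ∀ x ∈ s, ∃ y ∈ s, dist x y ∈ I

theorem EveryPointHasDistIn.mono {s : Set X} {I J : Set ℝ} (h : EveryPointHasDistIn s I)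
    (hIJ : I ⊆ J) : EveryPointHasDistIn s J := fun x hx =>
  (h x hx).imp fun _ ⟨hy, hxy⟩ => ⟨hy, hIJ hxy⟩

theorem perfect_univ_iff_forall_everyPointHasDistIn :
    Perfect (univ : Set X) ↔
      ∀ n : ℕ, EveryPointHasDistIn (univ : Set X) (Ioo 0 (1 / (n + 1 : ℝ))) := by
  rw [← closure_univ (X := X), ← preperfect_iff_perfect_closure, closure_univ,
    preperfect_iff_nhds]
  simp only [EveryPointHasDistIn, mem_univ, inter_univ, true_and, forall_const]
  constructor
  · intro h n x
    obtain ⟨y, hy, hyx⟩ := h x (ball x (1 / (n + 1))) (ball_mem_nhds x (by positivity))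
    exact ⟨y, dist_pos.2 hyx.symm, mem_ball'.1 hy⟩
  · intro h x U hU
    obtain ⟨ε, hε, hball⟩ := Metric.mem_nhds_iff.1 hU
    obtain ⟨n, hn⟩ := exists_nat_one_div_lt hε
    obtain ⟨y, hxy, hyn⟩ := h n x
    exact ⟨y, hball (mem_ball'.2 (hyn.trans hn)), (dist_pos.1 hxy).symm⟩

theorem exists_pos_everyPointHasDistIn_Ioo [CompactSpace X] {ε : ℝ}
    (h : EveryPointHasDistIn (univ : Set X) (Ioo 0 ε)) :
    ∃ r > 0, EveryPointHasDistIn (univ : Set X) (Ioo r (ε - r)) := by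
  let U : Ioi (0 : ℝ) → Set X := fun r => {x | ∃ y, dist x y ∈ Ioo (r : ℝ) (ε - r)}
  have hU_open (r) : IsOpen (U r) := by
    simp only [U, ofPred_exists]
    exact isOpen_iUnion fun y => isOpen_Ioo.preimage (continuous_id.dist continuous_const)
  have hU_cover : univ ⊆ ⋃ r, U r := by
    intro x _
    obtain ⟨y, -, hxy⟩ := h x (mem_univ x)
    have hr : 0 < min (dist x y) (ε - dist x y) / 2 := half_pos (lt_min hxy.1 (sub_pos.2 hxy.2))
    refine mem_iUnion.2 ⟨⟨_, hr⟩, y, ?_, ?_⟩ <;>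
      linarith [min_le_left (dist x y) (ε - dist x y), min_le_right (dist x y) (ε - dist x y)]
  have hU_anti : Antitone U := fun r s (hrs : (r : ℝ) ≤ s) x ⟨y, hy⟩ =>
    ⟨y, Ioo_subset_Ioo hrs (sub_le_sub_left hrs ε) hy⟩
  obtain ⟨r, hr⟩ := isCompact_univ.elim_directed_cover U hU_open hU_cover hU_anti.directed_le
  refine ⟨r, r.2, fun x _ => ?_⟩
  obtain ⟨y, hy⟩ := hr (mem_univ x)
  exact ⟨y, mem_univ y, hy⟩

theorem EveryPointHasDistIn.of_hausdorffDist_lt {s t : Set X} {a b δ : ℝ}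
    (h : EveryPointHasDistIn s (Ioo a b)) (hfin : hausdorffEDist s t ≠ ⊤)
    (hδ : hausdorffDist s t < δ) : EveryPointHasDistIn t (Ioo (a - 2 * δ) (b + 2 * δ)) := by
  intro x hx
  obtain ⟨x₀, hx₀, hxx₀⟩ := exists_dist_lt_of_hausdorffDist_lt' hx hδ hfin
  obtain ⟨y₀, hy₀, hx₀y₀⟩ := h x₀ hx₀
  obtain ⟨y, hy, hy₀y⟩ := exists_dist_lt_of_hausdorffDist_lt hy₀ hδ hfin
  refine ⟨y, hy, ?_, ?_⟩
  · linarith [hx₀y₀.1, dist_triangle4 x₀ x y y₀, dist_comm x₀ x, dist_comm y₀ y]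
  · linarith [hx₀y₀.2, dist_triangle4 x x₀ y₀ y, dist_comm x₀ x]

theorem Isometry.everyPointHasDistIn_range_iff {Y : Type*} [MetricSpace Y] {f : X → Y}
    (hf : Isometry f) {I : Set ℝ} :
    EveryPointHasDistIn (range f) I ↔ EveryPointHasDistIn (univ : Set X) I := by
  simp [EveryPointHasDistIn, hf.dist_eq]

theorem IsometryEquiv.everyPointHasDistIn_univ_iff {Y : Type*} [MetricSpace Y] (e : X ≃ᵢ Y)
    {I : Set ℝ} :
    EveryPointHasDistIn (univ : Set Y) I ↔ EveryPointHasDistIn (univ : Set X) I := by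
  rw [← e.isometry.everyPointHasDistIn_range_iff, e.range_eq_univ]

theorem IsometryEquiv.perfect_univ_iff {Y : Type*} [MetricSpace Y] (e : X ≃ᵢ Y) :
    Perfect (univ : Set Y) ↔ Perfect (univ : Set X) := by
  simp_rw [perfect_univ_iff_forall_everyPointHasDistIn, e.everyPointHasDistIn_univ_iff]

theorem EveryPointHasDistIn.of_ghDist_lt [CompactSpace X] [Nonempty X] {Y : Type*}
    [MetricSpace Y] [CompactSpace Y] [Nonempty Y] {a b δ : ℝ}
    (h : EveryPointHasDistIn (univ : Set X) (Ioo a b)) (hδ : ghDist X Y < δ) :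
    EveryPointHasDistIn (univ : Set Y) (Ioo (a - 2 * δ) (b + 2 * δ)) := by
  obtain ⟨Φ, Ψ, hΦ, hΨ, hD⟩ := ghDist_eq_hausdorffDist X Y
  have hfin : hausdorffEDist (range Φ) (range Ψ) ≠ ⊤ :=
    hausdorffEDist_ne_top_of_nonempty_of_bounded (range_nonempty _) (range_nonempty _)
      (isCompact_range hΦ.continuous).isBounded (isCompact_range hΨ.continuous).isBounded
  rw [← hΨ.everyPointHasDistIn_range_iff]
  exact (hΦ.everyPointHasDistIn_range_iff.2 h).of_hausdorffDist_lt hfin (hD ▸ hδ)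

end EveryPointHasDistIn

theorem isOpen_setOf_everyPointHasDistIn_Ioo (ε : ℝ) :
    IsOpen {p : GHSpace | EveryPointHasDistIn (univ : Set p.Rep) (Ioo 0 ε)} := by
  refine Metric.isOpen_iff.2 fun p hp => ?_
  obtain ⟨r, hr, hpr⟩ := exists_pos_everyPointHasDistIn_Ioo hp
  refine ⟨r / 2, half_pos hr, fun q hq => ?_⟩
  rw [mem_ball', dist_ghDist] at hq
  exact (hpr.of_ghDist_lt hq).mono (Ioo_subset_Ioo (by linarith) (by linarith))

instance {X Y : Type*} [TopologicalSpace X] [TopologicalSpace Y] [PerfectSpace Y] :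
    PerfectSpace (X × Y) := by
  refine perfectSpace_iff_forall_not_isolated.2 fun ⟨x, y⟩ => ?_
  have : Tendsto (fun y' => (x, y')) (𝓝[≠] y) (𝓝[≠] (x, y)) :=
    tendsto_nhdsWithin_of_tendsto_nhds_of_eventually_within _
      ((Continuous.prodMk_right x).tendsto y |>.mono_left nhdsWithin_le_nhds)
      (eventually_nhdsWithin_of_forall fun y' hy' => by simpa using hy')
  exact this.neBot

theorem ghDist_prod_le {X Y : Type*} [MetricSpace X] [CompactSpace X] [Nonempty X]
    [MetricSpace Y] [CompactSpace Y] [Nonempty Y] {r : ℝ} (hY : ∀ y y' : Y, dist y y' ≤ r) :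
    ghDist X (X × Y) ≤ r := by
  obtain ⟨y₀⟩ := ‹Nonempty Y›
  have hr : 0 ≤ r := (dist_self y₀).symm.le.trans (hY y₀ y₀)
  have hΦ : Isometry fun x : X => (x, y₀) :=
    Isometry.of_dist_eq fun x x' => by simp [Prod.dist_eq]
  refine (ghDist_le_hausdorffDist hΦ isometry_id).trans (hausdorffDist_le_of_mem_dist hr ?_ ?_)
  · rintro _ ⟨x, rfl⟩
    exact ⟨(x, y₀), mem_range_self _, by simpa using hr⟩
  · rintro ⟨x, y⟩ -
    exact ⟨(x, y₀), mem_range_self x, by simpa [Prod.dist_eq] using hY y y₀⟩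

theorem dense_setOf_perfect_univ : Dense {p : GHSpace | Perfect (univ : Set p.Rep)} := by
  refine Metric.dense_iff.2 fun p r hr => ?_
  have hr₂ : 0 < r / 2 := half_pos hr
  have : Nonempty (Icc 0 (r / 2)) := ⟨⟨0, left_mem_Icc.2 hr₂.le⟩⟩
  have : ConnectedSpace (Icc 0 (r / 2)) := Subtype.connectedSpace (isConnected_Icc hr₂.le)
  have : Nontrivial (Icc 0 (r / 2)) :=
    ⟨⟨0, left_mem_Icc.2 hr₂.le⟩, ⟨r / 2, right_mem_Icc.2 hr₂.le⟩,
      by simpa using hr₂.ne⟩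
  let Z := p.Rep × Icc (0 : ℝ) (r / 2)
  refine ⟨toGHSpace Z, ?_, ?_⟩
  · have hdist : dist p (toGHSpace Z) = ghDist p.Rep Z := by rw [ghDist, p.toGHSpace_rep]
    rw [mem_ball', hdist]
    have hdiam (y y' : Icc (0 : ℝ) (r / 2)) : dist y y' ≤ r / 2 - 0 :=
      Real.dist_le_of_mem_Icc y.2 y'.2
    exact (ghDist_prod_le hdiam).trans_lt (by linarith)
  · obtain ⟨e⟩ := toGHSpace_eq_toGHSpace_iff_isometryEquiv.1 (toGHSpace Z).toGHSpace_rep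
    exact e.perfect_univ_iff.1 (PerfectSpace.univ_perfect Z)

/-- A generic compact metric space is perfect (has no isolated point). -/
theorem residual_perfect :
    {p : GHSpace | Perfect (Set.univ : Set p.Rep)} ∈ residual GHSpace := by
  have hGδ : {p : GHSpace | Perfect (univ : Set p.Rep)} = ⋂ n : ℕ,
      {p : GHSpace | EveryPointHasDistIn (univ : Set p.Rep) (Ioo 0 (1 / (n + 1 : ℝ)))} :=
    Set.ext fun p => by
      simp only [mem_ofPred_eq, mem_iInter, perfect_univ_iff_forall_everyPointHasDistIn]
  refine residual_of_dense_Gδ ?_ dense_setOf_perfect_univ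
  rw [hGδ]
  exact .iInter_of_isOpen fun n => isOpen_setOf_everyPointHasDistIn_Ioo _
end

section
/- Perfect compact metric spaces are dense in the Gromov-Hausdorff space: for every finite metric space F with codiameter greater than ε > 0, the space F × [0,ε] with distance d((a,s),(b,t)) = d_F(a,b) + s + t if a ≠ b and |s − t| if a = b is a perfect compact metric space at Gromov-Hausdorff distance at most ε from F. -/
/-!
The formula defines a metric for every metric space `F`: the fibre over `a` is an isometric
copy of `[0, ε]`, and a path between different fibres has to run down to their roots. Each
fibre is a connected, nontrivial interval, so no point is isolated. Since `F` is finite, hence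
discrete, the space is a continuous image of the compact product `F × [0, ε]`. Finally the
roots `(a, 0)` form an isometric copy of `F` which every point `(a, t)` lies within `t ≤ ε` of.
-/

open Set Filter Topology GromovHausdorff

theorem Topology.IsEmbedding.neBot_nhdsNE {X Y : Type*} [TopologicalSpace X] [TopologicalSpace Y]
    {f : X → Y} (hf : IsEmbedding f) (x : X) [(𝓝[≠] x).NeBot] : (𝓝[≠] f x).NeBot := by
  have : (map f (𝓝[≠] x)).NeBot := inferInstance
  rw [hf.map_nhdsWithin_eq] at this
  refine this.mono (nhdsWithin_mono _ ?_)
  rw [← image_singleton]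
  exact image_compl_subset hf.injective

theorem GromovHausdorff.ghDist_le_of_isometry_of_forall_dist_le {X Y : Type*} [MetricSpace X]
    [CompactSpace X] [Nonempty X] [MetricSpace Y] [CompactSpace Y] [Nonempty Y] {f : X → Y}
    (hf : Isometry f) {r : ℝ} (hr : ∀ y, ∃ x, dist y (f x) ≤ r) : ghDist X Y ≤ r := by
  have hr₀ : 0 ≤ r := by
    obtain ⟨x, hx⟩ := hr (Classical.arbitrary Y)
    exact dist_nonneg.trans hx
  refine (ghDist_le_hausdorffDist hf isometry_id).trans ?_
  rw [range_id]
  refine Metric.hausdorffDist_le_of_mem_dist hr₀ ?_ fun y _ => ?_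
  · rintro _ ⟨x, rfl⟩
    exact ⟨f x, mem_univ _, by simpa using hr₀⟩
  · obtain ⟨x, hx⟩ := hr y
    exact ⟨f x, mem_range_self x, hx⟩

/-- Type synonym for `F × Icc 0 ε`, which already carries the sup metric. -/
def Spiked (F : Type*) (ε : ℝ) : Type _ := F × Icc (0 : ℝ) ε

namespace Spiked

variable {F : Type*} {ε : ℝ}

def mk (a : F) (t : Icc (0 : ℝ) ε) : Spiked F ε := (a, t)

def base (p : Spiked F ε) : F := (p : F × Icc (0 : ℝ) ε).1

def height (p : Spiked F ε) : ℝ := (p : F × Icc (0 : ℝ) ε).2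

@[simp] theorem base_mk (a : F) (t : Icc (0 : ℝ) ε) : (mk a t).base = a := rfl

@[simp] theorem height_mk (a : F) (t : Icc (0 : ℝ) ε) : (mk a t).height = t := rfl

theorem height_nonneg (p : Spiked F ε) : 0 ≤ p.height := (p : F × Icc (0 : ℝ) ε).2.2.1

theorem height_le (p : Spiked F ε) : p.height ≤ ε := (p : F × Icc (0 : ℝ) ε).2.2.2

protected theorem ext {p q : Spiked F ε} (hb : p.base = q.base) (hh : p.height = q.height) :
    p = q :=
  Prod.ext hb (Subtype.ext hh)

theorem surjective_uncurry_mk :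
    Function.Surjective (Function.uncurry (mk : F → Icc (0 : ℝ) ε → Spiked F ε)) :=
  fun p => ⟨p, rfl⟩

variable [MetricSpace F] [DecidableEq F]

instance : Dist (Spiked F ε) where
  dist p q := if p.base = q.base then |p.height - q.height|
    else dist p.base q.base + p.height + q.height

theorem dist_of_base_eq {p q : Spiked F ε} (h : p.base = q.base) :
    dist p q = |p.height - q.height| := if_pos h

theorem dist_of_base_ne {p q : Spiked F ε} (h : p.base ≠ q.base) :
    dist p q = dist p.base q.base + p.height + q.height := if_neg h

theorem abs_height_sub_le_dist (p q : Spiked F ε) : |p.height - q.height| ≤ dist p q := by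
  by_cases h : p.base = q.base
  · rw [dist_of_base_eq h]
  · rw [dist_of_base_ne h, abs_sub_le_iff]
    constructor <;>
      linarith [p.height_nonneg, q.height_nonneg, dist_nonneg (x := p.base) (y := q.base)]

protected theorem dist_triangle (p q r : Spiked F ε) : dist p r ≤ dist p q + dist q r := by
  have hq := q.height_nonneg
  by_cases hpr : p.base = r.base
  · rw [dist_of_base_eq hpr]
    exact (abs_sub_le _ _ _).trans
      (add_le_add (abs_height_sub_le_dist p q) (abs_height_sub_le_dist q r))
  rw [dist_of_base_ne hpr]
  by_cases hpq : p.base = q.base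
  · rw [dist_of_base_ne fun h => hpr (hpq.trans h), ← hpq]
    linarith [le_abs_self (p.height - q.height), abs_height_sub_le_dist p q]
  by_cases hqr : q.base = r.base
  · rw [dist_of_base_ne hpq, hqr]
    linarith [neg_abs_le (q.height - r.height), abs_height_sub_le_dist q r]
  rw [dist_of_base_ne hpq, dist_of_base_ne hqr]
  linarith [dist_triangle p.base q.base r.base]

instance : MetricSpace (Spiked F ε) where
  dist_self p := by rw [dist_of_base_eq rfl, sub_self, abs_zero]
  dist_comm p q := by
    by_cases h : p.base = q.base
    · rw [dist_of_base_eq h, dist_of_base_eq h.symm, abs_sub_comm]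
    · rw [dist_of_base_ne h, dist_of_base_ne (Ne.symm h), dist_comm]
      ring
  dist_triangle := Spiked.dist_triangle
  eq_of_dist_eq_zero {p q} h := by
    by_cases hb : p.base = q.base
    · exact Spiked.ext hb (sub_eq_zero.1 (abs_eq_zero.1 (dist_of_base_eq hb ▸ h)))
    · rw [dist_of_base_ne hb] at h
      linarith [dist_pos.2 hb, p.height_nonneg, q.height_nonneg]

theorem isometry_mk (a : F) : Isometry (mk a : Icc (0 : ℝ) ε → Spiked F ε) :=
  Isometry.of_dist_eq fun s t => by
    rw [dist_of_base_eq (p := mk a s) (q := mk a t) rfl, Subtype.dist_eq, Real.dist_eq]; rfl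

theorem isometry_mk_zero (hε : 0 ≤ ε) :
    Isometry fun a : F => (mk a ⟨0, left_mem_Icc.2 hε⟩ : Spiked F ε) :=
  Isometry.of_dist_eq fun a b => by
    by_cases h : a = b
    · simp [h]
    · rw [dist_of_base_ne (p := mk a _) (q := mk b _) h]; simp

instance [Finite F] : CompactSpace (Spiked F ε) :=
  surjective_uncurry_mk.compactSpace
    (continuous_prod_of_discrete_left.2 fun a => (isometry_mk a).continuous)

theorem perfectSpace (hε : 0 < ε) : PerfectSpace (Spiked F ε) := by
  have : ConnectedSpace (Icc (0 : ℝ) ε) := Subtype.connectedSpace (isConnected_Icc hε.le)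
  have : Nontrivial (Icc (0 : ℝ) ε) :=
    ⟨⟨0, left_mem_Icc.2 hε.le⟩, ⟨ε, right_mem_Icc.2 hε.le⟩,
      fun h => hε.ne (congrArg Subtype.val h)⟩
  rw [perfectSpace_iff_forall_not_isolated]
  rintro ⟨a, t⟩
  exact (isometry_mk a).isEmbedding.neBot_nhdsNE t

theorem ghDist_le [Finite F] [Nonempty F] [Nonempty (Spiked F ε)] :
    ghDist F (Spiked F ε) ≤ ε := by
  have hε : 0 ≤ ε :=
    let p := Classical.arbitrary (Spiked F ε)
    p.height_nonneg.trans p.height_le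
  refine ghDist_le_of_isometry_of_forall_dist_le (isometry_mk_zero hε) fun p => ⟨p.base, ?_⟩
  rw [dist_of_base_eq (p := p) (q := mk p.base ⟨0, left_mem_Icc.2 hε⟩) rfl, height_mk,
    sub_zero, abs_of_nonneg p.height_nonneg]
  exact p.height_le

end Spiked

theorem perfect_approximation_of_finite_general (F : Type*) [MetricSpace F] [Fintype F] [Nonempty F]
    [DecidableEq F] (ε : ℝ) (hε : 0 < ε) :
    ∃ m : MetricSpace (F × Set.Icc (0 : ℝ) ε),
      (∀ p q : F × Set.Icc (0 : ℝ) ε,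
        m.dist p q = if p.1 = q.1 then |(p.2 : ℝ) - (q.2 : ℝ)|
          else dist p.1 q.1 + (p.2 : ℝ) + (q.2 : ℝ)) ∧
      ∃ (hc : @CompactSpace _ m.toUniformSpace.toTopologicalSpace)
        (hne : Nonempty (F × Set.Icc (0 : ℝ) ε)),
        @Perfect _ m.toUniformSpace.toTopologicalSpace Set.univ ∧
        @ghDist F (F × Set.Icc (0 : ℝ) ε) _ _ _ m hne hc ≤ ε := by
  have : Nonempty (Icc (0 : ℝ) ε) := ⟨⟨0, left_mem_Icc.2 hε.le⟩⟩
  have : Nonempty (Spiked F ε) := inferInstanceAs (Nonempty (F × Icc (0 : ℝ) ε))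
  exact ⟨(inferInstance : MetricSpace (Spiked F ε)), fun p q => rfl,
    inferInstanceAs (CompactSpace (Spiked F ε)), inferInstance,
    (Spiked.perfectSpace hε).univ_perfect, Spiked.ghDist_le⟩

/-- Density of perfect spaces: for a finite metric space `F` and `0 < ε` less than the
codiameter of `F`, the set `F × [0, ε]` can be endowed with the metric
`d((a,s),(b,t)) = d_F(a,b) + s + t` if `a ≠ b` and `|s - t|` if `a = b`, and with this metric
it is a perfect compact metric space at Gromov-Hausdorff distance at most `ε` from `F`. -/
theorem perfect_approximation_of_finite (F : Type*) [MetricSpace F] [Fintype F] [Nonempty F]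
    [DecidableEq F] (ε : ℝ) (hε : 0 < ε) (hcdm : ∀ a b : F, a ≠ b → ε < dist a b) :
    ∃ m : MetricSpace (F × Set.Icc (0 : ℝ) ε),
      (∀ p q : F × Set.Icc (0 : ℝ) ε,
        m.dist p q = if p.1 = q.1 then |(p.2 : ℝ) - (q.2 : ℝ)|
          else dist p.1 q.1 + (p.2 : ℝ) + (q.2 : ℝ)) ∧
      ∃ (hc : @CompactSpace _ m.toUniformSpace.toTopologicalSpace)
        (hne : Nonempty (F × Set.Icc (0 : ℝ) ε)),
        @Perfect _ m.toUniformSpace.toTopologicalSpace Set.univ ∧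
        @ghDist F (F × Set.Icc (0 : ℝ) ε) _ _ _ m hne hc ≤ ε :=
  perfect_approximation_of_finite_general F ε hε
end

section
/- For a generic compact metric space X, the set of distance values d(X) = {d(x,y) : x,y ∈ X} ⊆ ℝ is homeomorphic to the Cantor set. -/
/-!
The distance set `D(X)` depends 2-Lipschitz continuously on `X`, for the Gromov–Hausdorff metric
on spaces and the Hausdorff metric on compact subsets of `ℝ`. For every `ε > 0` two conditions on a
compact `K ⊆ ℝ` are open in the Hausdorff metric: `K` lies in an open set containing no interval of
length `ε`, and every point of `K` has, with a uniform margin, another point of `K` at distance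
less than `ε`. The first holds on a dense set because finite spaces are dense, the second because
`X × [0, η]` with the `ℓ¹` metric is `η`-close to `X` and has distance set `D(X) + [0, η]`.
On the intersection of these countably many dense open sets, `D(X)` is a nonempty compact perfect
set with empty interior. Cutting such a set repeatedly at points outside it near the middle gives
a Cantor scheme with vanishing diameters, hence a homeomorphism with `ℕ → Bool`.
-/

open Set Metric Filter Topology TopologicalSpace GromovHausdorff
open scoped Pointwise

namespace CantorScheme

open Function PiNat

variable {α : Type*}

theorem exists_forall_mem_res {A : List Bool → Set α}
    (hA : ∀ l, A l ⊆ A (false :: l) ∪ A (true :: l)) {t : α} (ht : t ∈ A []) :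
    ∃ x : ℕ → Bool, ∀ n, t ∈ A (res x n) := by
  classical
  let next (l : List Bool) : List Bool := decide (t ∈ A (true :: l)) :: l
  let x (n : ℕ) : Bool := decide (t ∈ A (true :: next^[n] []))
  have hres (n : ℕ) : res x n = next^[n] [] := by
    induction n with
    | zero => rfl
    | succ n ih => rw [res_succ, ih, iterate_succ_apply']
  refine ⟨x, fun n => ?_⟩
  induction n with
  | zero => exact ht
  | succ n ih =>
    rw [hres] at ih ⊢
    rw [iterate_succ_apply']
    by_cases h : t ∈ A (true :: next^[n] [])
    · simp [next, h]
    · simpa [next, h] using (hA _ ih).resolve_right h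

theorem VanishingDiam.eq_of_forall_mem_res {β : Type*} [MetricSpace α] {A : List β → Set α}
    (hA : VanishingDiam A) {x : ℕ → β} {y z : α}
    (hy : ∀ n, y ∈ A (res x n)) (hz : ∀ n, z ∈ A (res x n)) : y = z :=
  eq_of_forall_dist_le fun ε hε =>
    let ⟨n, hn⟩ := hA.dist_lt ε hε x
    (hn y (hy n) z (hz n)).le

theorem nonempty_homeomorph_cantorSpace [MetricSpace α] [CompleteSpace α] {A : List Bool → Set α}
    (hsplit : ∀ l, A (false :: l) ∪ A (true :: l) = A l) (hclosed : ∀ l, IsClosed (A l))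
    (hnonempty : ∀ l, (A l).Nonempty) (hdisj : CantorScheme.Disjoint A)
    (hdiam : VanishingDiam A) : Nonempty (A [] ≃ₜ (ℕ → Bool)) := by
  have hanti : CantorScheme.Antitone A := fun l b => by
    rw [← hsplit l]; cases b
    · exact subset_union_left
    · exact subset_union_right
  have hdom : (inducedMap A).1 = univ :=
    (hanti.closureAntitone hclosed).map_of_vanishingDiam hdiam hnonempty
  let f (x : ℕ → Bool) : A [] := ⟨(inducedMap A).2 ⟨x, hdom ▸ mem_univ x⟩, map_mem _ 0⟩
  have hf : Continuous f :=
    (hdiam.map_continuous.comp (continuous_id.subtype_mk _)).subtype_mk _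
  have hbij : Bijective f := by
    refine ⟨fun x y hxy => ?_, fun ⟨t, ht⟩ => ?_⟩
    · have := hdisj.map_injective (a₁ := ⟨x, hdom ▸ mem_univ x⟩) (a₂ := ⟨y, hdom ▸ mem_univ y⟩)
        (congrArg Subtype.val hxy)
      exact congrArg Subtype.val this
    · obtain ⟨x, hx⟩ := exists_forall_mem_res (fun l => (hsplit l).symm.subset) ht
      exact ⟨x, Subtype.ext (hdiam.eq_of_forall_mem_res (map_mem _) hx)⟩
  exact ⟨(hf.homeoOfEquivCompactToT2 (f := Equiv.ofBijective f hbij)).symm⟩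

end CantorScheme

structure IsCantorLike (K : Set ℝ) : Prop where
  isCompact : IsCompact K
  nonempty : K.Nonempty
  preperfect : Preperfect K
  interior_eq_empty : interior K = ∅

-- `Classical.epsilon` returns an arbitrary point unless `K` has empty interior and two points.
noncomputable def cutPoint (K : Set ℝ) : ℝ :=
  Classical.epsilon fun c => c ∉ K ∧ |c - (sInf K + sSup K) / 2| < (sSup K - sInf K) / 4

def cutHalf (K : Set ℝ) : Bool → Set ℝ
  | false => K ∩ Iic (cutPoint K)
  | true => K ∩ Ici (cutPoint K)

theorem cutHalf_union (K : Set ℝ) : cutHalf K false ∪ cutHalf K true = K := by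
  simp only [cutHalf, ← inter_union_distrib_left, Iic_union_Ici, inter_univ]

section Cut

variable {K : Set ℝ} (hK : IsCantorLike K)
include hK

theorem IsCantorLike.sInf_lt_sSup : sInf K < sSup K := by
  obtain ⟨x, hx⟩ := hK.nonempty
  obtain ⟨y, hy, hyx⟩ := accPt_iff_nhds.1 (hK.preperfect x hx) univ Filter.univ_mem
  have hbdd := hK.isCompact.isBounded
  rcases lt_or_gt_of_ne hyx with h | h
  · exact (csInf_le hbdd.bddBelow hy.2).trans_lt (h.trans_le (le_csSup hbdd.bddAbove hx))
  · exact (csInf_le hbdd.bddBelow hx).trans_lt (h.trans_le (le_csSup hbdd.bddAbove hy.2))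

theorem cutPoint_spec : cutPoint K ∉ K ∧
    |cutPoint K - (sInf K + sSup K) / 2| < (sSup K - sInf K) / 4 := by
  refine Classical.epsilon_spec (p := fun c => c ∉ K ∧ _) ?_
  set m := (sInf K + sSup K) / 2
  set r := (sSup K - sInf K) / 4
  have hr : 0 < r := by have := hK.sInf_lt_sSup; unfold r; linarith
  obtain ⟨c, hc, hcK⟩ := not_subset.1 fun h : Ioo (m - r) (m + r) ⊆ K =>
    (nonempty_Ioo.2 (by linarith)).ne_empty
      (subset_empty_iff.1 (hK.interior_eq_empty ▸ interior_maximal h isOpen_Ioo))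
  exact ⟨c, hcK, abs_sub_lt_iff.2 ⟨by linarith [hc.2], by linarith [hc.1]⟩⟩

theorem disjoint_cutHalf : Disjoint (cutHalf K false) (cutHalf K true) := by
  refine disjoint_left.2 fun x hx hx' => (cutPoint_spec hK).1 ?_
  exact (le_antisymm hx.2 hx'.2 : x = cutPoint K) ▸ hx.1

theorem cutHalf_subset_Icc (b : Bool) :
    cutHalf K b ⊆ Icc (sInf K) (cutPoint K) ∨ cutHalf K b ⊆ Icc (cutPoint K) (sSup K) := by
  cases b
  · exact .inl fun x hx => ⟨csInf_le hK.isCompact.bddBelow hx.1, hx.2⟩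
  · exact .inr fun x hx => ⟨hx.2, le_csSup hK.isCompact.bddAbove hx.1⟩

theorem isCantorLike_cutHalf (b : Bool) : IsCantorLike (cutHalf K b) := by
  obtain ⟨hcK, hc⟩ := cutPoint_spec hK
  have hlt := hK.sInf_lt_sSup
  -- As the cut point lies outside `K`, each half is relatively open in `K`, hence preperfect.
  have hcK' {x} (hx : x ∈ K) : x ≠ cutPoint K := fun h => hcK (h ▸ hx)
  cases b
  · have heq : cutHalf K false = Iio (cutPoint K) ∩ K := by
      ext x; simp only [cutHalf, mem_inter_iff, mem_Iic, mem_Iio]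
      exact ⟨fun h => ⟨lt_of_le_of_ne h.2 (hcK' h.1), h.1⟩, fun h => ⟨h.2, h.1.le⟩⟩
    refine ⟨hK.isCompact.inter_right isClosed_Iic, ⟨sInf K, hK.isCompact.sInf_mem hK.nonempty, ?_⟩,
      heq ▸ hK.preperfect.open_inter isOpen_Iio,
      subset_empty_iff.1 (hK.interior_eq_empty ▸ interior_mono inter_subset_left)⟩
    have := (abs_sub_lt_iff.1 hc).2
    show sInf K ≤ cutPoint K; linarith
  · have heq : cutHalf K true = Ioi (cutPoint K) ∩ K := by
      ext x; simp only [cutHalf, mem_inter_iff, mem_Ici, mem_Ioi]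
      exact ⟨fun h => ⟨lt_of_le_of_ne h.2 (hcK' h.1).symm, h.1⟩, fun h => ⟨h.2, h.1.le⟩⟩
    refine ⟨hK.isCompact.inter_right isClosed_Ici, ⟨sSup K, hK.isCompact.sSup_mem hK.nonempty, ?_⟩,
      heq ▸ hK.preperfect.open_inter isOpen_Ioi,
      subset_empty_iff.1 (hK.interior_eq_empty ▸ interior_mono inter_subset_left)⟩
    have := (abs_sub_lt_iff.1 hc).1
    show cutPoint K ≤ sSup K; linarith

theorem diam_cutHalf_le (b : Bool) : diam (cutHalf K b) ≤ 3 / 4 * diam K := by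
  have hc := abs_sub_lt_iff.1 (cutPoint_spec hK).2
  have := hK.sInf_lt_sSup
  rw [Real.diam_eq hK.isCompact.isBounded]
  rcases cutHalf_subset_Icc hK b with h | h
  · refine (diam_mono h (isBounded_Icc _ _)).trans ?_
    rw [Real.diam_Icc] <;> linarith
  · refine (diam_mono h (isBounded_Icc _ _)).trans ?_
    rw [Real.diam_Icc] <;> linarith

end Cut

noncomputable def cutScheme (K : Set ℝ) : List Bool → Set ℝ
  | [] => K
  | b :: l => cutHalf (cutScheme K l) b

section Scheme

variable {K : Set ℝ} (hK : IsCantorLike K)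
include hK

theorem isCantorLike_cutScheme : ∀ l, IsCantorLike (cutScheme K l)
  | [] => hK
  | b :: l => isCantorLike_cutHalf (isCantorLike_cutScheme l) b

theorem diam_cutScheme_le : ∀ l : List Bool, diam (cutScheme K l) ≤ (3 / 4) ^ l.length * diam K
  | [] => by simp [cutScheme]
  | b :: l => calc
      diam (cutScheme K (b :: l)) ≤ 3 / 4 * diam (cutScheme K l) :=
        diam_cutHalf_le (isCantorLike_cutScheme hK l) b
      _ ≤ 3 / 4 * ((3 / 4) ^ l.length * diam K) := by gcongr; exact diam_cutScheme_le l
      _ = (3 / 4) ^ (b :: l).length * diam K := by rw [List.length_cons, pow_succ]; ring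

theorem vanishingDiam_cutScheme : CantorScheme.VanishingDiam (cutScheme K) := by
  intro x
  have hdiam : Tendsto (fun n => diam (cutScheme K (PiNat.res x n))) atTop (𝓝 0) := by
    have hgeom : Tendsto (fun n : ℕ => (3 / 4 : ℝ) ^ n * diam K) atTop (𝓝 0) := by
      simpa using (tendsto_pow_atTop_nhds_zero_of_lt_one (r := (3 / 4 : ℝ)) (by norm_num)
        (by norm_num)).mul_const (diam K)
    refine squeeze_zero (fun n => diam_nonneg) (fun n => ?_) hgeom
    simpa [PiNat.res_length] using diam_cutScheme_le hK (PiNat.res x n)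
  have hbdd (l) : Bornology.IsBounded (cutScheme K l) :=
    (isCantorLike_cutScheme hK l).isCompact.isBounded
  simp_rw [Real.ediam_eq (hbdd _), ← Real.diam_eq (hbdd _)]
  simpa using ENNReal.tendsto_ofReal hdiam

theorem IsCantorLike.nonempty_homeomorph_cantorSpace : Nonempty (K ≃ₜ (ℕ → Bool)) :=
  CantorScheme.nonempty_homeomorph_cantorSpace (fun l => cutHalf_union _)
    (fun l => (isCantorLike_cutScheme hK l).isCompact.isClosed)
    (fun l => (isCantorLike_cutScheme hK l).nonempty)
    (fun l => by
      rintro (_ | _) (_ | _) hne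
      · exact absurd rfl hne
      · exact disjoint_cutHalf (isCantorLike_cutScheme hK l)
      · exact (disjoint_cutHalf (isCantorLike_cutScheme hK l)).symm
      · exact absurd rfl hne)
    (vanishingDiam_cutScheme hK)

end Scheme

theorem TopologicalSpace.NonemptyCompacts.exists_dist_lt_of_dist_lt {α : Type*} [MetricSpace α]
    {K L : NonemptyCompacts α} {r : ℝ} (h : dist K L < r) {x : α} (hx : x ∈ K) :
    ∃ y ∈ L, dist x y < r :=
  exists_dist_lt_of_hausdorffDist_lt hx h <| hausdorffEDist_ne_top_of_nonempty_of_bounded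
    K.nonempty L.nonempty K.isCompact.isBounded L.isCompact.isBounded

def IsThin (ε : ℝ) (K : Set ℝ) : Prop :=
  ∃ U, IsOpen U ∧ K ⊆ U ∧ ∀ a b, Icc a b ⊆ U → b - a < ε

-- The margin `δ` is what makes this condition open in the Hausdorff metric.
def IsSpread {α : Type*} [PseudoMetricSpace α] (ε : ℝ) (K : Set α) : Prop :=
  ∃ δ > 0, ∀ t ∈ K, ∃ s ∈ K, δ < dist s t ∧ dist s t + δ < ε

theorem isOpen_setOf_isThin (ε : ℝ) : IsOpen {K : NonemptyCompacts ℝ | IsThin ε (K : Set ℝ)} := by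
  refine Metric.isOpen_iff.2 fun K ⟨U, hU, hKU, hlen⟩ => ?_
  obtain ⟨δ, hδ, hδU⟩ := K.isCompact.exists_thickening_subset_open hU hKU
  refine ⟨δ, hδ, fun L hL => ⟨U, hU, fun y hy => hδU ?_, hlen⟩⟩
  obtain ⟨x, hx, hxy⟩ := NonemptyCompacts.exists_dist_lt_of_dist_lt (mem_ball.1 hL) hy
  exact mem_thickening_iff.2 ⟨x, hx, hxy⟩

theorem isOpen_setOf_isSpread {α : Type*} [MetricSpace α] (ε : ℝ) :
    IsOpen {K : NonemptyCompacts α | IsSpread ε (K : Set α)} := by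
  refine Metric.isOpen_iff.2 fun K ⟨δ, hδ, hK⟩ => ⟨δ / 3, by positivity, fun L hL => ?_⟩
  rw [mem_ball] at hL
  refine ⟨δ / 3, by positivity, fun t' ht' => ?_⟩
  obtain ⟨t, ht, htt'⟩ := NonemptyCompacts.exists_dist_lt_of_dist_lt hL ht'
  obtain ⟨s, hs, hst, hstε⟩ := hK t ht
  obtain ⟨s', hs', hss'⟩ := NonemptyCompacts.exists_dist_lt_of_dist_lt (dist_comm L K ▸ hL) hs
  have h₁ := dist_triangle4 s s' t' t
  have h₂ := dist_triangle4 s' s t t'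
  rw [dist_comm s' s, dist_comm t t'] at h₂
  exact ⟨s', hs', by linarith, by linarith⟩

theorem interior_eq_empty_of_forall_isThin {K : Set ℝ} (h : ∀ n : ℕ, IsThin (1 / (n + 1)) K) :
    interior K = ∅ := by
  refine eq_empty_of_forall_notMem fun x hx => ?_
  obtain ⟨r, hr, hball⟩ := Metric.isOpen_iff.1 isOpen_interior x hx
  obtain ⟨n, hn⟩ := exists_nat_one_div_lt hr
  obtain ⟨U, -, hKU, hlen⟩ := h n
  have hIcc : Icc (x - r / 2) (x + r / 2) ⊆ U := by
    rw [← Real.closedBall_eq_Icc]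
    exact (closedBall_subset_ball (by linarith)).trans (hball.trans interior_subset) |>.trans hKU
  linarith [hlen _ _ hIcc]

theorem preperfect_of_forall_isSpread {α : Type*} [PseudoMetricSpace α] {K : Set α}
    (h : ∀ n : ℕ, IsSpread (1 / (n + 1)) K) : Preperfect K := by
  intro x hx
  refine accPt_iff_nhds.2 fun U hU => ?_
  obtain ⟨r, hr, hball⟩ := Metric.mem_nhds_iff.1 hU
  obtain ⟨n, hn⟩ := exists_nat_one_div_lt hr
  obtain ⟨δ, hδ, hK⟩ := h n
  obtain ⟨s, hs, hsx, hsxn⟩ := hK x hx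
  exact ⟨s, ⟨hball (mem_ball.2 (by linarith)), hs⟩, fun h => by simp [h] at hsx; linarith⟩

open MeasureTheory in
theorem Set.Finite.isThin {K : Set ℝ} (hK : K.Finite) {ε : ℝ} (hε : 0 < ε) : IsThin ε K := by
  set N : ℕ := hK.toFinset.card
  set r := ε / (2 * (N + 1))
  have hr : 0 < r := by positivity
  refine ⟨thickening r K, isOpen_thickening, self_subset_thickening hr K, fun a b hab => ?_⟩
  have hvol : ENNReal.ofReal (b - a) ≤ ENNReal.ofReal (N * (2 * r)) := calc
    ENNReal.ofReal (b - a) = volume (Icc a b) := Real.volume_Icc.symm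
    _ ≤ volume (⋃ x ∈ hK.toFinset, ball x r) := by
      refine measure_mono (hab.trans ?_)
      simp [thickening_eq_biUnion_ball]
    _ ≤ ∑ x ∈ hK.toFinset, volume (ball x r) := measure_biUnion_finset_le _ _
    _ = ENNReal.ofReal (N * (2 * r)) := by
      simp [Real.volume_ball, N, ENNReal.ofReal_mul, ENNReal.ofReal_natCast]
  have hNr : N * (2 * r) < ε := by
    rw [show N * (2 * r) = ε * (N / (N + 1)) by simp only [r]; field_simp]
    exact mul_lt_of_lt_one_right hε ((div_lt_one (by positivity)).2 (by linarith))
  linarith [(ENNReal.ofReal_le_ofReal_iff (by positivity)).1 hvol]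

theorem IsSpread.add_left {α : Type*} [SeminormedAddCommGroup α] {ε : ℝ} {B : Set α}
    (hB : IsSpread ε B) (A : Set α) : IsSpread ε (A + B) := by
  obtain ⟨δ, hδ, hB⟩ := hB
  refine ⟨δ, hδ, ?_⟩
  rintro _ ⟨a, ha, b, hb, rfl⟩
  obtain ⟨b', hb', h⟩ := hB b hb
  exact ⟨a + b', add_mem_add ha hb', by rwa [dist_add_left]⟩

theorem isSpread_Icc {ε η : ℝ} (hη : 0 < η) (hηε : η ≤ ε) : IsSpread ε (Icc 0 η) := by
  refine ⟨η / 4, by positivity, fun r hr => ?_⟩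
  rcases le_or_gt r (η / 2) with h | h
  · refine ⟨r + η / 2, ⟨by linarith [hr.1], by linarith⟩, ?_⟩
    rw [Real.dist_eq, add_sub_cancel_left, abs_of_pos (by positivity)]
    constructor <;> linarith
  · refine ⟨r - η / 2, ⟨by linarith, by linarith [hr.2]⟩, ?_⟩
    rw [Real.dist_eq, sub_sub_cancel_left, abs_neg, abs_of_pos (by positivity)]
    constructor <;> linarith

def distSet (X : Type*) [Dist X] : Set ℝ := {d | ∃ x y : X, dist x y = d}

section DistSet

variable {X Y : Type*}

theorem distSet_eq_range [Dist X] : distSet X = range fun z : X × X => dist z.1 z.2 := by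
  ext; simp [distSet]

theorem isCompact_distSet [PseudoMetricSpace X] [CompactSpace X] : IsCompact (distSet X) := by
  rw [distSet_eq_range]; exact isCompact_range (by fun_prop)

theorem distSet_nonempty [Dist X] [Nonempty X] : (distSet X).Nonempty :=
  let ⟨x⟩ := ‹Nonempty X›
  ⟨_, x, x, rfl⟩

theorem finite_distSet [Dist X] [Finite X] : (distSet X).Finite := by
  rw [distSet_eq_range]; exact finite_range _

theorem IsometryEquiv.distSet_eq [PseudoMetricSpace X] [PseudoMetricSpace Y] (e : X ≃ᵢ Y) :
    distSet X = distSet Y := by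
  ext d
  exact ⟨fun ⟨x, y, h⟩ => ⟨e x, e y, (e.dist_eq x y).trans h⟩,
    fun ⟨x, y, h⟩ => ⟨e.symm x, e.symm y, (e.symm.dist_eq x y).trans h⟩⟩

theorem distSet_withLp_one_prod [PseudoMetricSpace X] [PseudoMetricSpace Y] :
    distSet (WithLp 1 (X × Y)) = distSet X + distSet Y := by
  have hdist (u v : WithLp 1 (X × Y)) : dist u v = dist u.fst v.fst + dist u.snd v.snd := by
    simp [WithLp.prod_dist_eq_add (p := 1) (by norm_num)]
  ext d
  rw [Set.mem_add]
  constructor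
  · rintro ⟨u, v, rfl⟩
    exact ⟨_, ⟨u.fst, v.fst, rfl⟩, _, ⟨u.snd, v.snd, rfl⟩, (hdist u v).symm⟩
  · rintro ⟨_, ⟨x, x', rfl⟩, _, ⟨y, y', rfl⟩, rfl⟩
    exact ⟨WithLp.toLp 1 (x, y), WithLp.toLp 1 (x', y'), hdist _ _⟩

theorem distSet_Icc {η : ℝ} (hη : 0 ≤ η) : distSet (Icc 0 η) = Icc 0 η := by
  ext d
  constructor
  · rintro ⟨x, y, rfl⟩
    exact ⟨dist_nonneg, (Real.dist_le_of_mem_Icc x.2 y.2).trans_eq (sub_zero η)⟩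
  · intro hd
    refine ⟨⟨d, hd⟩, ⟨0, left_mem_Icc.2 hη⟩, ?_⟩
    simp [Subtype.dist_eq, abs_of_nonneg hd.1]

end DistSet

instance WithLp.instProdCompactSpace {p : ENNReal} {α β : Type*} [TopologicalSpace α]
    [TopologicalSpace β] [CompactSpace α] [CompactSpace β] : CompactSpace (WithLp p (α × β)) :=
  (WithLp.homeomorphProd p α β).symm.compactSpace

instance WithLp.instNonempty {p : ENNReal} {V : Type*} [Nonempty V] : Nonempty (WithLp p V) :=
  ⟨WithLp.toLp p (Classical.arbitrary V)⟩

section GromovHausdorff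

variable {X Y Z : Type*} [MetricSpace X] [CompactSpace X] [Nonempty X]
  [MetricSpace Y] [CompactSpace Y] [Nonempty Y] [MetricSpace Z]

theorem exists_dist_le_hausdorffDist_of_isometry {Φ : X → Z} {Ψ : Y → Z} (hΦ : Isometry Φ)
    (hΨ : Isometry Ψ) (x : X) : ∃ y, dist (Φ x) (Ψ y) ≤ hausdorffDist (range Φ) (range Ψ) := by
  obtain ⟨_, ⟨y, rfl⟩, hy⟩ :=
    (isCompact_range hΨ.continuous).exists_infDist_eq_dist (range_nonempty Ψ) (Φ x)
  refine ⟨y, hy ▸ infDist_le_hausdorffDist_of_mem (mem_range_self x) ?_⟩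
  exact hausdorffEDist_ne_top_of_nonempty_of_bounded (range_nonempty Φ) (range_nonempty Ψ)
    (isCompact_range hΦ.continuous).isBounded (isCompact_range hΨ.continuous).isBounded

theorem exists_dist_distSet_le_of_isometry {Φ : X → Z} {Ψ : Y → Z} (hΦ : Isometry Φ)
    (hΨ : Isometry Ψ) :
    ∀ d ∈ distSet X, ∃ d' ∈ distSet Y, dist d d' ≤ 2 * hausdorffDist (range Φ) (range Ψ) := by
  rintro _ ⟨x₁, x₂, rfl⟩
  obtain ⟨y₁, h₁⟩ := exists_dist_le_hausdorffDist_of_isometry hΦ hΨ x₁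
  obtain ⟨y₂, h₂⟩ := exists_dist_le_hausdorffDist_of_isometry hΦ hΨ x₂
  refine ⟨dist y₁ y₂, ⟨y₁, y₂, rfl⟩, ?_⟩
  rw [← hΦ.dist_eq, ← hΨ.dist_eq]
  linarith [dist_dist_dist_le (Φ x₁) (Φ x₂) (Ψ y₁) (Ψ y₂)]

theorem hausdorffDist_distSet_le_of_isometry {Φ : X → Z} {Ψ : Y → Z} (hΦ : Isometry Φ)
    (hΨ : Isometry Ψ) :
    hausdorffDist (distSet X) (distSet Y) ≤ 2 * hausdorffDist (range Φ) (range Ψ) :=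
  hausdorffDist_le_of_mem_dist (mul_nonneg zero_le_two hausdorffDist_nonneg)
    (exists_dist_distSet_le_of_isometry hΦ hΨ)
    (hausdorffDist_comm (s := range Φ) ▸ exists_dist_distSet_le_of_isometry hΨ hΦ)

theorem hausdorffDist_distSet_le_ghDist :
    hausdorffDist (distSet X) (distSet Y) ≤ 2 * ghDist X Y :=
  hausdorffDist_optimal (X := X) (Y := Y) ▸
    hausdorffDist_distSet_le_of_isometry (isometry_optimalGHInjl X Y) (isometry_optimalGHInjr X Y)

theorem dist_toGHSpace_le_of_isometry [CompactSpace Z] [Nonempty Z] {Φ : X → Z}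
    (hΦ : Isometry Φ) {r : ℝ} (hr : 0 ≤ r) (h : ∀ z, ∃ x, dist z (Φ x) ≤ r) :
    dist (toGHSpace X) (toGHSpace Z) ≤ r := by
  refine (ghDist_le_hausdorffDist hΦ isometry_id).trans (hausdorffDist_le_of_mem_dist hr ?_ ?_)
  · exact fun z _ => ⟨z, mem_range_self z, by simpa using hr⟩
  · rintro z -
    obtain ⟨x, hx⟩ := h z
    exact ⟨Φ x, mem_range_self x, hx⟩

theorem dist_toGHSpace_withLp_prod_le {y₀ : Y} {r : ℝ} (h : ∀ y, dist y y₀ ≤ r) :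
    dist (toGHSpace X) (toGHSpace (WithLp 1 (X × Y))) ≤ r := by
  have hdist (u v : WithLp 1 (X × Y)) : dist u v = dist u.fst v.fst + dist u.snd v.snd := by
    simp [WithLp.prod_dist_eq_add (p := 1) (by norm_num)]
  refine dist_toGHSpace_le_of_isometry (Φ := fun x => WithLp.toLp 1 (x, y₀))
    (Isometry.of_dist_eq fun x x' => by simp [hdist]) (dist_nonneg.trans (h y₀)) fun z => ?_
  exact ⟨z.fst, by simpa [hdist] using h z.snd⟩

end GromovHausdorff

namespace GromovHausdorff.GHSpace

theorem nonempty_isometryEquiv_rep_toGHSpace (X : Type*) [MetricSpace X] [CompactSpace X]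
    [Nonempty X] : Nonempty ((toGHSpace X).Rep ≃ᵢ X) :=
  toGHSpace_eq_toGHSpace_iff_isometryEquiv.1 (toGHSpace X).toGHSpace_rep

theorem distSet_rep_toGHSpace (X : Type*) [MetricSpace X] [CompactSpace X] [Nonempty X] :
    distSet (toGHSpace X).Rep = distSet X :=
  (nonempty_isometryEquiv_rep_toGHSpace X).some.distSet_eq

def distValues (p : GHSpace) : NonemptyCompacts ℝ :=
  ⟨⟨distSet p.Rep, isCompact_distSet⟩, distSet_nonempty⟩

theorem lipschitzWith_distValues : LipschitzWith 2 distValues :=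
  LipschitzWith.of_dist_le_mul fun p q => by
    rw [NonemptyCompacts.dist_eq, dist_ghDist]
    exact_mod_cast hausdorffDist_distSet_le_ghDist

theorem dense_setOf_finite : Dense {p : GHSpace | Finite p.Rep} := by
  refine Metric.dense_iff.2 fun p r hr => ?_
  obtain ⟨t, -, htfin, htcov⟩ :=
    finite_cover_balls_of_compact (isCompact_univ (X := p.Rep)) (half_pos hr)
  obtain ⟨x₀, hx₀, -⟩ := mem_iUnion₂.1 (htcov (mem_univ (Classical.arbitrary p.Rep)))
  have : Nonempty t := ⟨⟨x₀, hx₀⟩⟩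
  have : Finite t := htfin
  have hdist : dist (toGHSpace t) (toGHSpace p.Rep) ≤ r / 2 := by
    refine dist_toGHSpace_le_of_isometry isometry_subtype_coe (half_pos hr).le fun x => ?_
    obtain ⟨y, hy, hxy⟩ := mem_iUnion₂.1 (htcov (mem_univ x))
    exact ⟨⟨y, hy⟩, (mem_ball.1 hxy).le⟩
  rw [p.toGHSpace_rep] at hdist
  refine ⟨toGHSpace t, mem_ball.2 (by linarith), ?_⟩
  exact Finite.of_equiv _ (nonempty_isometryEquiv_rep_toGHSpace t).some.symm.toEquiv

theorem dense_setOf_isSpread {ε : ℝ} (hε : 0 < ε) :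
    Dense {p : GHSpace | IsSpread ε (distSet p.Rep)} := by
  refine Metric.dense_iff.2 fun p r hr => ?_
  set η := min ε (r / 2)
  have hη : 0 < η := lt_min hε (half_pos hr)
  have h₀ : (0 : ℝ) ∈ Icc 0 η := left_mem_Icc.2 hη.le
  have : Nonempty (Icc 0 η) := ⟨⟨0, h₀⟩⟩
  have hdist := dist_toGHSpace_withLp_prod_le (X := p.Rep) (y₀ := (⟨0, h₀⟩ : Icc 0 η))
    fun y => (Real.dist_le_of_mem_Icc y.2 h₀).trans_eq (sub_zero η)
  rw [p.toGHSpace_rep] at hdist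
  refine ⟨_, mem_ball'.2 (hdist.trans_lt ((min_le_right _ _).trans_lt (half_lt_self hr))), ?_⟩
  change IsSpread ε (distSet (toGHSpace _).Rep)
  rw [distSet_rep_toGHSpace, distSet_withLp_one_prod, distSet_Icc hη.le]
  exact (isSpread_Icc hη (min_le_left _ _)).add_left _

theorem residual_setOf_isThin {ε : ℝ} (hε : 0 < ε) :
    {p : GHSpace | IsThin ε (distSet p.Rep)} ∈ residual GHSpace :=
  residual_of_dense_open ((isOpen_setOf_isThin ε).preimage lipschitzWith_distValues.continuous)
    (dense_setOf_finite.mono fun _ (_ : Finite _) => finite_distSet.isThin hε)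

theorem residual_setOf_isSpread {ε : ℝ} (hε : 0 < ε) :
    {p : GHSpace | IsSpread ε (distSet p.Rep)} ∈ residual GHSpace :=
  residual_of_dense_open ((isOpen_setOf_isSpread ε).preimage lipschitzWith_distValues.continuous)
    (dense_setOf_isSpread hε)

end GromovHausdorff.GHSpace

open GromovHausdorff.GHSpace in
/-- For a generic compact metric space `X`, the set of distance values
`{d(x,y) | x, y ∈ X} ⊆ ℝ` is homeomorphic to the Cantor set (here represented by the
Cantor space `ℕ → Bool`). -/
theorem residual_distanceValues_cantor :
    {p : GHSpace |
      Nonempty (({d : ℝ | ∃ x y : p.Rep, dist x y = d} : Set ℝ) ≃ₜ (ℕ → Bool))} ∈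
      residual GHSpace := by
  have hgood (n : ℕ) : {p : GHSpace | IsThin (1 / (n + 1)) (distSet p.Rep) ∧
      IsSpread (1 / (n + 1)) (distSet p.Rep)} ∈ residual GHSpace :=
    inter_mem (residual_setOf_isThin Nat.one_div_pos_of_nat)
      (residual_setOf_isSpread Nat.one_div_pos_of_nat)
  refine mem_of_superset (countable_iInter_mem.2 hgood) fun p hp => ?_
  have hp (n : ℕ) := mem_iInter.1 hp n
  exact IsCantorLike.nonempty_homeomorph_cantorSpace
    ⟨isCompact_distSet, distSet_nonempty, preperfect_of_forall_isSpread fun n => (hp n).2,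
      interior_eq_empty_of_forall_isThin fun n => (hp n).1⟩
end

section
/- The set of compact metric spaces containing a 4-point subspace with strictly negative Cayley–Menger determinant is open and dense in the Gromov-Hausdorff space; consequently, a generic compact metric space cannot be isometrically embedded into any Hilbert space. -/
open GromovHausdorff

/-- The Cayley–Menger determinant of a quadruple of points with pairwise distances `d i j`. -/
noncomputable def cayleyMenger (d : Fin 4 → Fin 4 → ℝ) : ℝ :=
  (1 / 288) * Matrix.det
    !![0, 1, 1, 1, 1;
       1, 0, (d 0 1) ^ 2, (d 0 2) ^ 2, (d 0 3) ^ 2;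
       1, (d 1 0) ^ 2, 0, (d 1 2) ^ 2, (d 1 3) ^ 2;
       1, (d 2 0) ^ 2, (d 2 1) ^ 2, 0, (d 2 3) ^ 2;
       1, (d 3 0) ^ 2, (d 3 1) ^ 2, (d 3 2) ^ 2, 0]


/-!
In a Hilbert space the Cayley–Menger determinant of four points is `1/36` times the Gram
determinant of the three vectors `x i - x 0`, hence nonnegative; so a negative determinant is an
obstruction to embedding. The condition "some injective quadruple has negative determinant" only
involves finitely many distances, which move by at most `2ε` under a Gromov–Hausdorff perturbation
of size `ε`, so it defines an open set. It is dense because `X × Z` is within `diam Z` of `X`, and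
a tiny `Z` can carry a non-Euclidean quadruple (the centre and three vertices of a small square
in the sup metric).
An open dense set is a dense `Gδ`, whence residuality.
-/

open Metric Set

lemma continuous_cayleyMenger : Continuous cayleyMenger := by
  unfold cayleyMenger
  fun_prop

lemma cayleyMenger_eq_det {d g : Fin 4 → Fin 4 → ℝ} (hg : ∀ i j, g i j = g j i)
    (hg0 : ∀ i, g 0 i = 0) (hd : ∀ i j, d i j ^ 2 = g i i - 2 * g i j + g j j) :
    cayleyMenger d = (Matrix.of fun i j : Fin 3 => g i.succ j.succ).det / 36 := by
  have hg0' : ∀ i, g i 0 = 0 := fun i => hg i 0 ▸ hg0 i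
  rw [cayleyMenger, Matrix.det_succ_row_zero (n := 4), Matrix.det_fin_three]
  simp only [Matrix.det_succ_row_zero (n := 3), Fin.sum_univ_succ, Matrix.det_fin_three]
  simp [Fin.succAbove, hd, hg0, hg0']
  rw [hg 2 1, hg 3 1, hg 3 2]
  ring

section InnerProductSpace

variable {E : Type*} [NormedAddCommGroup E] [InnerProductSpace ℝ E]

lemma cayleyMenger_dist_eq_det_gram (x : Fin 4 → E) :
    cayleyMenger (fun i j => dist (x i) (x j)) =
      (Matrix.gram ℝ fun i : Fin 3 => x i.succ - x 0).det / 36 :=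
  cayleyMenger_eq_det (g := fun i j => inner ℝ (x i - x 0) (x j - x 0))
    (fun _ _ => real_inner_comm _ _) (by simp) fun i j => by
      rw [dist_eq_norm, ← sub_sub_sub_cancel_right (x i) (x j) (x 0), norm_sub_sq_real,
        real_inner_self_eq_norm_sq, real_inner_self_eq_norm_sq]

lemma cayleyMenger_dist_nonneg (x : Fin 4 → E) :
    0 ≤ cayleyMenger (fun i j => dist (x i) (x j)) := by
  rw [cayleyMenger_dist_eq_det_gram]
  exact div_nonneg (Matrix.posSemidef_gram ℝ _).det_nonneg (by norm_num)

end InnerProductSpace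

/-- In the sup metric of `ℝ × ℝ` the last three points are at distance `δ` from the origin and
`2δ` from each other. No Euclidean quadruple looks like this: three points pairwise `2δ` apart
have circumradius `2δ / √3 > δ`. -/
def starPoints (δ : ℝ) : Fin 4 → ℝ × ℝ := ![(0, 0), (δ, δ), (-δ, -δ), (δ, -δ)]

lemma cayleyMenger_starPoints_neg {δ : ℝ} (hδ : 0 < δ) :
    cayleyMenger (fun i j => dist (starPoints δ i) (starPoints δ j)) < 0 := by
  -- `δ ^ 2 * G` is the Gram matrix a Euclidean realisation would have; `det` of its corner is `-4`.
  let G : Fin 4 → Fin 4 → ℝ :=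
    ![![0, 0, 0, 0], ![0, 1, -1, -1], ![0, -1, 1, -1], ![0, -1, -1, 1]]
  have hd : ∀ i j, dist (starPoints δ i) (starPoints δ j) ^ 2 =
      δ ^ 2 * G i i - 2 * (δ ^ 2 * G i j) + δ ^ 2 * G j j := by
    have h2 : |δ + δ| = 2 * δ := by rw [abs_of_pos (by linarith)]; ring
    have h2δ : (0 : ℝ) ≤ 2 * δ := by positivity
    intro i j
    fin_cases i <;> fin_cases j <;>
      simp [G, starPoints, Prod.dist_eq, Real.dist_eq, abs_of_pos hδ, h2, max_eq_left h2δ,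
        max_eq_right h2δ] <;> ring
  rw [cayleyMenger_eq_det (g := fun i j => δ ^ 2 * G i j)
    (fun i j => by fin_cases i <;> fin_cases j <;> rfl) (fun i => by fin_cases i <;> simp [G]) hd,
    Matrix.det_fin_three]
  simp [G]
  nlinarith [pow_pos hδ 6]

theorem Isometry.prodMk_left {X Y : Type*} [PseudoEMetricSpace X] [PseudoEMetricSpace Y]
    (y : Y) : Isometry fun x : X => (x, y) :=
  fun x x' => by simp [Prod.edist_eq]

theorem Isometry.prodMk_right {X Y : Type*} [PseudoEMetricSpace X] [PseudoEMetricSpace Y]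
    (x : X) : Isometry (Prod.mk x : Y → X × Y) :=
  fun y y' => by simp [Prod.edist_eq]

namespace GromovHausdorff

variable {X Y : Type*} [MetricSpace X] [CompactSpace X] [Nonempty X]
  [MetricSpace Y] [CompactSpace Y] [Nonempty Y]

theorem exists_abs_dist_sub_dist_lt_of_ghDist_lt {ε : ℝ} (h : ghDist X Y < ε) {ι : Type*}
    (a : ι → X) : ∃ b : ι → Y, ∀ i j, |dist (b i) (b j) - dist (a i) (a j)| < 2 * ε := by
  set Φ := optimalGHInjl X Y
  set Ψ := optimalGHInjr X Y
  have hΦ : Isometry Φ := isometry_optimalGHInjl X Y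
  have hΨ : Isometry Ψ := isometry_optimalGHInjr X Y
  have hfin : hausdorffEDist (range Φ) (range Ψ) ≠ ⊤ :=
    hausdorffEDist_ne_top_of_nonempty_of_bounded (range_nonempty _) (range_nonempty _)
      (isCompact_range hΦ.continuous).isBounded (isCompact_range hΨ.continuous).isBounded
  have hclose : ∀ i, ∃ y, dist (Φ (a i)) (Ψ y) < ε := fun i => by
    obtain ⟨_, ⟨y, rfl⟩, hy⟩ := exists_dist_lt_of_hausdorffDist_lt (mem_range_self (a i))
      (hausdorffDist_optimal.trans_lt h) hfin
    exact ⟨y, hy⟩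
  choose b hb using hclose
  refine ⟨b, fun i j => ?_⟩
  rw [← hΦ.dist_eq, ← hΨ.dist_eq, ← Real.dist_eq]
  calc dist (dist (Ψ (b i)) (Ψ (b j))) (dist (Φ (a i)) (Φ (a j)))
      ≤ dist (Ψ (b i)) (Φ (a i)) + dist (Ψ (b j)) (Φ (a j)) := dist_dist_dist_le _ _ _ _
    _ < 2 * ε := by rw [dist_comm, dist_comm (Ψ _)]; linarith [hb i, hb j]

theorem ghDist_prod_le_diam (Z : Type*) [MetricSpace Z] [CompactSpace Z] [Nonempty Z] :
    ghDist X (X × Z) ≤ diam (univ : Set Z) := by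
  obtain ⟨z₀⟩ := ‹Nonempty Z›
  refine (ghDist_le_hausdorffDist (Isometry.prodMk_left z₀) isometry_id).trans
    (hausdorffDist_le_of_mem_dist diam_nonneg ?_ ?_)
  · exact fun y _ => ⟨y, mem_range_self y, by simpa using diam_nonneg⟩
  · rintro ⟨x, z⟩ -
    refine ⟨(x, z₀), mem_range_self x, ?_⟩
    simpa [Prod.dist_eq] using
      dist_le_diam_of_mem isCompact_univ.isBounded (mem_univ z) (mem_univ z₀)

theorem nonempty_isometryEquiv_rep_toGHSpace : Nonempty ((toGHSpace X).Rep ≃ᵢ X) :=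
  toGHSpace_eq_toGHSpace_iff_isometryEquiv.1 (toGHSpace X).toGHSpace_rep

theorem isOpen_setOf_exists_dist_mem {ι : Type*} [Fintype ι] {U : Set (ι → ι → ℝ)}
    (hU : IsOpen U) :
    IsOpen {p : GHSpace | ∃ a : ι → p.Rep, (fun i j => dist (a i) (a j)) ∈ U} := by
  refine Metric.isOpen_iff.2 ?_
  rintro p ⟨a, ha⟩
  obtain ⟨ε, hε, hball⟩ := Metric.isOpen_iff.1 hU _ ha
  refine ⟨ε / 2, half_pos hε, fun q hq => ?_⟩
  rw [mem_ball, dist_comm, dist_ghDist] at hq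
  obtain ⟨b, hb⟩ := exists_abs_dist_sub_dist_lt_of_ghDist_lt hq a
  refine ⟨b, hball <| (dist_pi_lt_iff hε).2 fun i => (dist_pi_lt_iff hε).2 fun j => ?_⟩
  rw [Real.dist_eq]
  linarith [hb i j]

end GromovHausdorff

def HasNegCayleyMengerQuadruple (X : Type*) [MetricSpace X] : Prop :=
  ∃ a : Fin 4 → X, Function.Injective a ∧ cayleyMenger (fun i j => dist (a i) (a j)) < 0

namespace HasNegCayleyMengerQuadruple

theorem of_isometry {X Y : Type*} [MetricSpace X] [MetricSpace Y] {f : X → Y} (hf : Isometry f)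
    (h : HasNegCayleyMengerQuadruple X) : HasNegCayleyMengerQuadruple Y := by
  obtain ⟨a, ha, hneg⟩ := h
  exact ⟨f ∘ a, hf.injective.comp ha, by simpa only [Function.comp_apply, hf.dist_eq]⟩

theorem not_of_innerProductSpace (E : Type*) [NormedAddCommGroup E] [InnerProductSpace ℝ E] :
    ¬HasNegCayleyMengerQuadruple E :=
  fun ⟨x, _, hneg⟩ => hneg.not_ge (cayleyMenger_dist_nonneg x)

theorem closedBall_real_prod {δ : ℝ} (hδ : 0 < δ) :
    HasNegCayleyMengerQuadruple (closedBall (0 : ℝ × ℝ) δ) := by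
  have hmem : ∀ i, starPoints δ i ∈ closedBall (0 : ℝ × ℝ) δ := fun i => by
    rw [mem_closedBall, dist_zero_right, Prod.norm_def, Real.norm_eq_abs, Real.norm_eq_abs]
    fin_cases i <;> simp [starPoints, abs_of_pos hδ, hδ.le]
  refine ⟨fun i => ⟨starPoints δ i, hmem i⟩, fun i j hij => ?_, cayleyMenger_starPoints_neg hδ⟩
  have : starPoints δ i = starPoints δ j := congrArg Subtype.val hij
  fin_cases i <;> fin_cases j <;> simp [starPoints, Prod.ext_iff] at this ⊢ <;> linarith

end HasNegCayleyMengerQuadruple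

theorem isOpen_setOf_hasNegCayleyMengerQuadruple :
    IsOpen {p : GHSpace | HasNegCayleyMengerQuadruple p.Rep} := by
  let U : Set (Fin 4 → Fin 4 → ℝ) :=
    {d | Pairwise fun i j => d i j ≠ 0} ∩ {d | cayleyMenger d < 0}
  have hU : IsOpen U := by
    refine IsOpen.inter ?_ (isOpen_lt continuous_cayleyMenger continuous_const)
    simp only [Pairwise, ofPred_forall]
    exact isOpen_iInter_of_finite fun i => isOpen_iInter_of_finite fun j =>
      isOpen_iInter_of_finite fun _ => isOpen_ne_fun (by fun_prop) continuous_const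
  convert isOpen_setOf_exists_dist_mem hU using 1
  ext p
  refine exists_congr fun a => and_congr ?_ Iff.rfl
  simp only [Function.injective_iff_pairwise_ne, mem_ofPred_eq, dist_ne_zero]

theorem dense_setOf_hasNegCayleyMengerQuadruple :
    Dense {p : GHSpace | HasNegCayleyMengerQuadruple p.Rep} := by
  refine Metric.dense_iff.2 fun p r hr => ?_
  let Z := closedBall (0 : ℝ × ℝ) (r / 4)
  have : CompactSpace Z := isCompact_iff_compactSpace.1 (isCompact_closedBall _ _)
  have : Nonempty Z := ⟨⟨0, mem_closedBall_self (by positivity)⟩⟩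
  obtain ⟨x₀⟩ : Nonempty p.Rep := inferInstance
  obtain ⟨e⟩ := nonempty_isometryEquiv_rep_toGHSpace (X := p.Rep × Z)
  refine ⟨toGHSpace (p.Rep × Z), ?_, ?_⟩
  · have hdiam : diam (univ : Set Z) ≤ 2 * (r / 4) := by
      rw [← isometry_subtype_coe.diam_range, Subtype.range_coe]
      exact diam_closedBall (by positivity)
    have hgh := ghDist_prod_le_diam (X := p.Rep) Z
    rw [ghDist, p.toGHSpace_rep] at hgh
    rw [mem_ball, dist_comm]
    linarith
  · exact (((HasNegCayleyMengerQuadruple.closedBall_real_prod (by positivity)).of_isometry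
      (Isometry.prodMk_right x₀)).of_isometry e.symm.isometry)

/-- The set of compact metric spaces containing four points with negative Cayley–Menger
determinant is open and dense; consequently, a generic compact metric space embeds
isometrically into no Hilbert space. -/
theorem isOpen_dense_negative_cayleyMenger_and_residual_no_hilbert_embedding :
    (IsOpen {p : GHSpace | ∃ a : Fin 4 → p.Rep, Function.Injective a ∧
        cayleyMenger (fun i j => dist (a i) (a j)) < 0} ∧
      Dense {p : GHSpace | ∃ a : Fin 4 → p.Rep, Function.Injective a ∧
        cayleyMenger (fun i j => dist (a i) (a j)) < 0}) ∧
    {p : GHSpace | ∀ (H : Type) [NormedAddCommGroup H] [InnerProductSpace ℝ H]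
        [CompleteSpace H], ¬∃ f : p.Rep → H, Isometry f} ∈ residual GHSpace := by
  refine ⟨⟨isOpen_setOf_hasNegCayleyMengerQuadruple, dense_setOf_hasNegCayleyMengerQuadruple⟩,
    mem_residual.2 ⟨_, ?_, isOpen_setOf_hasNegCayleyMengerQuadruple.isGδ,
      dense_setOf_hasNegCayleyMengerQuadruple⟩⟩
  rintro p hp H _ _ _ ⟨f, hf⟩
  exact HasNegCayleyMengerQuadruple.not_of_innerProductSpace H (hp.of_isometry hf)
end

section
/- A generic compact metric space has lower box dimension equal to zero and upper box dimension equal to infinity; that is, the set of compact metric spaces X with dim_B(X) = 0 and dim^B(X) = ∞ is residual in the Gromov-Hausdorff space. -/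
open GromovHausdorff Filter

/-- `coveringNumber X ε` : the minimal number of closed balls of radius `ε` needed to cover `X`. -/
noncomputable def coveringNumber (X : Type*) [MetricSpace X] (ε : ℝ) : ℕ :=
  sInf {n : ℕ | ∃ F : Finset X, F.card = n ∧ ∀ x : X, ∃ y ∈ F, dist x y ≤ ε}

/-- The lower box dimension of a compact metric space, as an extended real. -/
noncomputable def lowerBoxDim (X : Type*) [MetricSpace X] : EReal :=
  liminf (fun ε : ℝ => ((Real.log (coveringNumber X ε) / Real.log (1 / ε) : ℝ) : EReal))
    (nhdsWithin 0 (Set.Ioi 0))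

/-- The upper box dimension of a compact metric space, as an extended real. -/
noncomputable def upperBoxDim (X : Type*) [MetricSpace X] : EReal :=
  limsup (fun ε : ℝ => ((Real.log (coveringNumber X ε) / Real.log (1 / ε) : ℝ) : EReal))
    (nhdsWithin 0 (Set.Ioi 0))

/-!
If `ghDist X Y < δ` then `coveringNumber X (ε + 2δ) ≤ coveringNumber Y ε`, so for fixed `a` and
`c` the conditions "`log N(ε) / log (1/ε) < c` for some `ε < a`" and "`log N(ε) / log (1/ε) > c`
for some `ε < a`" are open in the Gromov-Hausdorff space. Both are dense. Finite spaces are dense,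
and for a finite space the ratio tends to `0`. Taking `n` copies of a finite space at mutual
distance `s` moves it by at most `s`, while `N(ε) ≥ n` once `2ε < s`, so for `n` large the ratio
at `ε` exceeds `c`. Intersecting over `a, c = 1/(m+1)` in the first case and `a = 1/(m+1)`,
`c = n` in the second gives a dense `G_δ` on which the liminf is `0` and the limsup is `∞`.
-/

open Set Topology

section CoveringNumber

variable {X Y : Type*} [MetricSpace X] [MetricSpace Y]

theorem coveringNumber_le_card {ε : ℝ} {F : Finset X} (hF : ∀ x, ∃ y ∈ F, dist x y ≤ ε) :
    coveringNumber X ε ≤ F.card :=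
  Nat.sInf_le ⟨F, rfl, hF⟩

theorem coveringNumber_le_card_univ [Fintype X] {ε : ℝ} (hε : 0 ≤ ε) :
    coveringNumber X ε ≤ Fintype.card X :=
  coveringNumber_le_card fun x => ⟨x, Finset.mem_univ x, by simpa using hε⟩

theorem exists_finset_card_eq_coveringNumber [CompactSpace X] {ε : ℝ} (hε : 0 < ε) :
    ∃ F : Finset X, F.card = coveringNumber X ε ∧ ∀ x, ∃ y ∈ F, dist x y ≤ ε := by
  obtain ⟨t, -, ht, hcover⟩ := finite_cover_balls_of_compact (isCompact_univ (X := X)) hε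
  refine Nat.sInf_mem (s := {n | ∃ F : Finset X, F.card = n ∧ ∀ x, ∃ y ∈ F, dist x y ≤ ε})
    ⟨ht.toFinset.card, ht.toFinset, rfl, fun x => ?_⟩
  obtain ⟨y, hy, hxy⟩ := mem_iUnion₂.1 (hcover (mem_univ x))
  exact ⟨y, ht.mem_toFinset.2 hy, (Metric.mem_ball.1 hxy).le⟩

/-- No closed `ε`-ball contains two points at distance `> 2ε`. -/
theorem card_le_coveringNumber [CompactSpace X] {ι : Type*} [Fintype ι] {ε : ℝ} (hε : 0 < ε)
    {f : ι → X} (hf : Pairwise fun i j => 2 * ε < dist (f i) (f j)) :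
    Fintype.card ι ≤ coveringNumber X ε := by
  obtain ⟨C, hC, hcover⟩ := exists_finset_card_eq_coveringNumber (X := X) hε
  choose c hcC hc using hcover
  rw [← hC, ← Fintype.card_coe]
  refine Fintype.card_le_of_injective (fun i => ⟨c (f i), hcC _⟩) fun i j hij => ?_
  by_contra hne
  have hcij : c (f i) = c (f j) := congrArg Subtype.val hij
  have hi := hc (f i)
  rw [hcij] at hi
  linarith [hf hne, hc (f j), dist_triangle_right (f i) (f j) (c (f j))]

theorem IsometryEquiv.exists_cover_of_exists_cover (e : X ≃ᵢ Y) {ε : ℝ} {n : ℕ}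
    (h : ∃ F : Finset X, F.card = n ∧ ∀ x, ∃ y ∈ F, dist x y ≤ ε) :
    ∃ F : Finset Y, F.card = n ∧ ∀ x, ∃ y ∈ F, dist x y ≤ ε := by
  obtain ⟨F, rfl, hF⟩ := h
  refine ⟨F.map e.toEquiv.toEmbedding, Finset.card_map _, fun y => ?_⟩
  obtain ⟨x, hx, hxy⟩ := hF (e.symm y)
  exact ⟨e x, Finset.mem_map_of_mem _ hx, by rwa [← e.dist_eq, e.apply_symm_apply] at hxy⟩

theorem IsometryEquiv.coveringNumber_eq (e : X ≃ᵢ Y) (ε : ℝ) :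
    coveringNumber X ε = coveringNumber Y ε := by
  unfold coveringNumber
  congr 1
  ext n
  exact ⟨e.exists_cover_of_exists_cover, e.symm.exists_cover_of_exists_cover⟩

theorem coveringNumber_add_two_mul_le_of_hausdorffDist_lt [CompactSpace Y] {Z : Type*}
    [MetricSpace Z] {Φ : X → Z} {Ψ : Y → Z} (hΦ : Isometry Φ) (hΨ : Isometry Ψ)
    (hfin : Metric.hausdorffEDist (range Φ) (range Ψ) ≠ ⊤) {δ ε : ℝ}
    (hδ : Metric.hausdorffDist (range Φ) (range Ψ) < δ) (hε : 0 < ε) :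
    coveringNumber X (ε + 2 * δ) ≤ coveringNumber Y ε := by
  classical
  obtain ⟨F, hF, hcover⟩ := exists_finset_card_eq_coveringNumber (X := Y) hε
  have hg : ∀ y, ∃ x, dist (Φ x) (Ψ y) < δ := fun y => by
    obtain ⟨_, ⟨x, rfl⟩, hx⟩ :=
      Metric.exists_dist_lt_of_hausdorffDist_lt' (mem_range_self y) hδ hfin
    exact ⟨x, hx⟩
  choose g hg using hg
  rw [← hF]
  refine (coveringNumber_le_card (F := F.image g) fun x => ?_).trans Finset.card_image_le
  obtain ⟨_, ⟨y, rfl⟩, hxy⟩ := Metric.exists_dist_lt_of_hausdorffDist_lt (mem_range_self x) hδ hfin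
  obtain ⟨z, hz, hyz⟩ := hcover y
  refine ⟨g z, Finset.mem_image_of_mem g hz, ?_⟩
  rw [← hΦ.dist_eq]
  rw [← hΨ.dist_eq] at hyz
  linarith [dist_triangle4 (Φ x) (Ψ y) (Ψ z) (Φ (g z)), hg z, dist_comm (Φ (g z)) (Ψ z)]

theorem coveringNumber_add_two_mul_le_of_ghDist_lt [CompactSpace X] [Nonempty X] [CompactSpace Y]
    [Nonempty Y] {δ ε : ℝ} (hδ : ghDist X Y < δ) (hε : 0 < ε) :
    coveringNumber X (ε + 2 * δ) ≤ coveringNumber Y ε := by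
  have hΦ := isometry_optimalGHInjl X Y
  have hΨ := isometry_optimalGHInjr X Y
  refine coveringNumber_add_two_mul_le_of_hausdorffDist_lt hΦ hΨ ?_
    (by rwa [hausdorffDist_optimal]) hε
  exact Metric.hausdorffEDist_ne_top_of_nonempty_of_bounded (range_nonempty _) (range_nonempty _)
    (isCompact_range hΦ.continuous).isBounded (isCompact_range hΨ.continuous).isBounded

theorem ghDist_le_of_isometry [CompactSpace X] [Nonempty X] [CompactSpace Y] [Nonempty Y]
    {f : X → Y} (hf : Isometry f) {r : ℝ} (hr : ∀ y, ∃ x, dist y (f x) ≤ r) : ghDist X Y ≤ r := by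
  simpa using ghDist_le_of_approx_subsets (s := univ) (fun x => f x) (ε₂ := 0)
    (fun x => ⟨x, mem_univ x, (dist_self x).le⟩)
    (fun y => let ⟨x, hx⟩ := hr y; ⟨⟨x, mem_univ x⟩, hx⟩)
    (fun x y => by simp [hf.dist_eq, Subtype.dist_eq])

end CoveringNumber

noncomputable def boxRatio (X : Type*) [MetricSpace X] (ε : ℝ) : ℝ :=
  Real.log (coveringNumber X ε) / Real.log (1 / ε)

theorem boxRatio_toGHSpace_rep (X : Type*) [MetricSpace X] [CompactSpace X] [Nonempty X] :
    boxRatio (toGHSpace X).Rep = boxRatio X := by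
  obtain ⟨e⟩ := (toGHSpace_eq_toGHSpace_iff_isometryEquiv (X := (toGHSpace X).Rep)).1
    (toGHSpace X).toGHSpace_rep
  ext ε
  rw [boxRatio, boxRatio, e.coveringNumber_eq]

theorem log_div_log_one_div_le {m n : ℕ} (h : m ≤ n) {t : ℝ} (ht : 0 < t) (ht1 : t ≤ 1) :
    Real.log m / Real.log (1 / t) ≤ Real.log n / Real.log (1 / t) := by
  refine div_le_div_of_nonneg_right ?_ (Real.log_nonneg ((one_le_div ht).2 ht1))
  rcases m.eq_zero_or_pos with rfl | hm
  · simpa using Real.log_natCast_nonneg n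
  · exact Real.log_le_log (by exact_mod_cast hm) (by exact_mod_cast h)

theorem continuousAt_div_log_one_div (b : ℝ) {t : ℝ} (ht : 0 < t) (ht1 : t < 1) :
    ContinuousAt (fun s => b / Real.log (1 / s)) t :=
  continuousAt_const.div ((continuousAt_const.div continuousAt_id ht.ne').log
    (one_div_pos.2 ht).ne') (Real.log_pos ((one_lt_div ht).2 ht1)).ne'

theorem isOpen_setOf_exists_boxRatio_lt {a : ℝ} (ha : a ≤ 1) (c : ℝ) :
    IsOpen {p : GHSpace | ∃ ε ∈ Ioo 0 a, boxRatio p.Rep ε < c} := by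
  refine Metric.isOpen_iff.2 fun p ⟨ε, ⟨hε, hεa⟩, hlt⟩ => ?_
  obtain ⟨ε', hε', hεε', hε'a⟩ : ∃ ε', Real.log (coveringNumber p.Rep ε) / Real.log (1 / ε') < c ∧
      ε' ∈ Ioo ε a :=
    (((continuousAt_div_log_one_div _ hε (hεa.trans_le ha)).eventually_lt continuousAt_const
      hlt).filter_mono nhdsWithin_le_nhds |>.and (Ioo_mem_nhdsGT hεa)).exists
  refine ⟨(ε' - ε) / 2, by linarith, fun q hq => ⟨ε', ⟨hε.trans hεε', hε'a⟩, ?_⟩⟩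
  have hN : coveringNumber q.Rep ε' ≤ coveringNumber p.Rep ε := by
    have hqp : ghDist q.Rep p.Rep < (ε' - ε) / 2 := by rwa [← dist_ghDist]
    convert coveringNumber_add_two_mul_le_of_ghDist_lt hqp hε using 2
    ring
  exact (log_div_log_one_div_le hN (hε.trans hεε') (hε'a.le.trans ha)).trans_lt hε'

theorem isOpen_setOf_exists_lt_boxRatio {a : ℝ} (ha : a ≤ 1) (c : ℝ) :
    IsOpen {p : GHSpace | ∃ ε ∈ Ioo 0 a, c < boxRatio p.Rep ε} := by
  refine Metric.isOpen_iff.2 fun p ⟨ε, ⟨hε, hεa⟩, hlt⟩ => ?_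
  obtain ⟨ε', hε', hε'0, hε'ε⟩ : ∃ ε', c < Real.log (coveringNumber p.Rep ε) / Real.log (1 / ε') ∧
      ε' ∈ Ioo 0 ε :=
    ((continuousAt_const.eventually_lt (continuousAt_div_log_one_div _ hε (hεa.trans_le ha))
      hlt).filter_mono nhdsWithin_le_nhds |>.and (Ioo_mem_nhdsLT hε)).exists
  refine ⟨(ε - ε') / 2, by linarith, fun q hq => ⟨ε', ⟨hε'0, hε'ε.trans hεa⟩, ?_⟩⟩
  have hN : coveringNumber p.Rep ε ≤ coveringNumber q.Rep ε' := by
    have hpq : ghDist p.Rep q.Rep < (ε - ε') / 2 := by rwa [← dist_ghDist, dist_comm]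
    convert coveringNumber_add_two_mul_le_of_ghDist_lt hpq hε'0 using 2
    ring
  exact hε'.trans_le (log_div_log_one_div_le hN hε'0 (hε'ε.trans hεa |>.le.trans ha))

theorem exists_finset_dist_toGHSpace_lt (p : GHSpace) {r : ℝ} (hr : 0 < r) :
    ∃ (F : Finset p.Rep) (_ : Nonempty F), dist p (toGHSpace F) < r := by
  obtain ⟨F, -, hF⟩ := exists_finset_card_eq_coveringNumber (X := p.Rep) (half_pos hr)
  obtain ⟨x, hx, -⟩ := hF (Classical.arbitrary _)
  have : Nonempty F := ⟨⟨x, hx⟩⟩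
  refine ⟨F, this, ?_⟩
  calc dist p (toGHSpace F) = ghDist F p.Rep := by rw [dist_comm, ghDist, p.toGHSpace_rep]
    _ ≤ r / 2 := ghDist_le_of_isometry isometry_subtype_coe fun x =>
      let ⟨y, hy, hxy⟩ := hF x; ⟨⟨y, hy⟩, hxy⟩
    _ < r := half_lt_self hr

theorem exists_boxRatio_lt_of_finite (X : Type*) [MetricSpace X] [Finite X] {a c : ℝ} (ha : 0 < a)
    (hc : 0 < c) : ∃ ε ∈ Ioo 0 a, boxRatio X ε < c := by
  cases nonempty_fintype X
  have hlim : Tendsto (fun ε => Real.log (Fintype.card X) / Real.log (1 / ε)) (𝓝[>] 0) (𝓝 0) :=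
    tendsto_const_nhds.div_atTop <| Real.tendsto_log_atTop.comp <|
      tendsto_inv_nhdsGT_zero.congr fun ε => (one_div ε).symm
  obtain ⟨ε, hεc, hε0, hε1⟩ :=
    ((hlim.eventually (gt_mem_nhds hc)).and (Ioo_mem_nhdsGT (lt_min ha (one_pos (α := ℝ))))).exists
  refine ⟨ε, ⟨hε0, hε1.trans_le (min_le_left _ _)⟩, lt_of_le_of_lt ?_ hεc⟩
  exact log_div_log_one_div_le (coveringNumber_le_card_univ hε0.le) hε0
    (hε1.le.trans (min_le_right _ _))

theorem dense_setOf_exists_boxRatio_lt {a c : ℝ} (ha : 0 < a) (hc : 0 < c) :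
    Dense {p : GHSpace | ∃ ε ∈ Ioo 0 a, boxRatio p.Rep ε < c} := by
  refine Metric.dense_iff.2 fun p r hr => ?_
  obtain ⟨F, _, hF⟩ := exists_finset_dist_toGHSpace_lt p hr
  refine ⟨toGHSpace F, Metric.mem_ball'.2 hF, ?_⟩
  show ∃ ε ∈ Ioo 0 a, boxRatio (toGHSpace F).Rep ε < c
  rw [boxRatio_toGHSpace_rep]
  exact exists_boxRatio_lt_of_finite F ha hc

@[reducible] def clusterMetricSpace (α : Type*) [MetricSpace α] (n : ℕ) {s : ℝ} (hs : 0 < s) :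
    MetricSpace (α × Fin n) where
  dist p q := dist p.1 q.1 + if p.2 = q.2 then 0 else s
  dist_self p := by simp
  dist_comm p q := by simp only [dist_comm p.1, eq_comm]
  dist_triangle p q r := by
    have := dist_triangle p.1 q.1 r.1
    split_ifs <;> simp_all <;> linarith
  eq_of_dist_eq_zero {p q} h := by
    have := dist_nonneg (x := p.1) (y := q.1)
    split_ifs at h with hpq
    · exact Prod.ext (dist_eq_zero.1 (by linarith)) hpq
    · linarith

theorem exists_dist_toGHSpace_le_lt_boxRatio (X : Type*) [MetricSpace X] [Finite X] [Nonempty X]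
    {s a : ℝ} (hs : 0 < s) (ha : 0 < a) (c : ℝ) :
    ∃ q : GHSpace, dist (toGHSpace X) q ≤ s ∧ ∃ ε ∈ Ioo 0 a, c < boxRatio q.Rep ε := by
  set ε := min (a / 2) (min (s / 3) (1 / 2))
  have hε : 0 < ε := lt_min (half_pos ha) (lt_min (by positivity) one_half_pos)
  have hεa : ε < a := (min_le_left _ _).trans_lt (half_lt_self ha)
  have hεs : ε ≤ s / 3 := (min_le_right _ _).trans (min_le_left _ _)
  have hε1 : ε < 1 := ((min_le_right _ _).trans (min_le_right _ _)).trans_lt one_half_lt_one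
  obtain ⟨n, hn⟩ := exists_nat_gt (Real.exp (c * Real.log (1 / ε)))
  have hn0 : 0 < n := by exact_mod_cast (Real.exp_pos _).trans hn
  let := clusterMetricSpace X n hs
  have : Nonempty (Fin n) := ⟨⟨0, hn0⟩⟩
  obtain ⟨x₀⟩ := ‹Nonempty X›
  refine ⟨toGHSpace (X × Fin n), ?_, ε, ⟨hε, hεa⟩, ?_⟩
  · refine ghDist_le_of_isometry (f := fun x => (x, ⟨0, hn0⟩))
      (Isometry.of_dist_eq fun x y => by
        show dist x y + (if (⟨0, hn0⟩ : Fin n) = ⟨0, hn0⟩ then 0 else s) = dist x y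
        simp) fun y => ⟨y.1, ?_⟩
    show dist y.1 y.1 + (if y.2 = ⟨0, hn0⟩ then 0 else s) ≤ s
    split_ifs <;> simp [hs.le]
  · have hN : n ≤ coveringNumber (X × Fin n) ε := by
      simpa using card_le_coveringNumber (f := fun i : Fin n => (x₀, i)) hε fun i j hij => by
        show 2 * ε < dist x₀ x₀ + if i = j then 0 else s
        simp only [dist_self, if_neg hij, zero_add]
        linarith
    rw [boxRatio_toGHSpace_rep]
    refine lt_of_lt_of_le ?_ (log_div_log_one_div_le hN hε hε1.le)
    rw [lt_div_iff₀ (Real.log_pos ((one_lt_div hε).2 hε1)), Real.lt_log_iff_exp_lt (by positivity)]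
    exact hn

theorem dense_setOf_exists_lt_boxRatio {a : ℝ} (ha : 0 < a) (c : ℝ) :
    Dense {p : GHSpace | ∃ ε ∈ Ioo 0 a, c < boxRatio p.Rep ε} := by
  refine Metric.dense_iff.2 fun p r hr => ?_
  obtain ⟨F, _, hF⟩ := exists_finset_dist_toGHSpace_lt p (half_pos hr)
  obtain ⟨q, hq, hq'⟩ := exists_dist_toGHSpace_le_lt_boxRatio F (half_pos hr) ha c
  exact ⟨q, Metric.mem_ball'.2 (by linarith [dist_triangle p (toGHSpace F) q]), hq'⟩

theorem frequently_nhdsGT_zero_of_forall_nat {P : ℝ → Prop}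
    (h : ∀ m : ℕ, ∃ ε ∈ Ioo 0 (1 / (m + 1 : ℝ)), P ε) : ∃ᶠ ε in 𝓝[>] 0, P ε :=
  (nhdsGT_basis 0).frequently_iff.2 fun _ hδ =>
    let ⟨m, hm⟩ := exists_nat_one_div_lt hδ
    let ⟨ε, ⟨hε0, hεm⟩, hε⟩ := h m
    ⟨ε, ⟨hε0, hεm.trans hm⟩, hε⟩

theorem lowerBoxDim_eq_zero {X : Type*} [MetricSpace X]
    (h : ∀ c > 0, ∃ᶠ ε in 𝓝[>] 0, boxRatio X ε < c) : lowerBoxDim X = 0 := by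
  refine le_antisymm (EReal.le_of_forall_lt_iff_le.1 fun c hc => ?_) ?_
  · exact liminf_le_of_frequently_le' <| (h c (EReal.coe_pos.1 hc)).mono fun ε hε =>
      EReal.coe_le_coe_iff.2 hε.le
  · refine le_liminf_of_le (by isBoundedDefault) ?_
    filter_upwards [Ioo_mem_nhdsGT one_pos] with ε ⟨hε0, hε1⟩
    exact EReal.coe_nonneg.2 <| div_nonneg (Real.log_natCast_nonneg _)
      (Real.log_nonneg ((one_le_div hε0).2 hε1.le))

theorem upperBoxDim_eq_top {X : Type*} [MetricSpace X]
    (h : ∀ c : ℝ, ∃ᶠ ε in 𝓝[>] 0, c < boxRatio X ε) : upperBoxDim X = ⊤ :=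
  (EReal.eq_top_iff_forall_lt _).2 fun c =>
    (EReal.coe_lt_coe_iff.2 (lt_add_one c)).trans_le <| le_limsup_of_frequently_le' <|
      (h (c + 1)).mono fun _ hε => EReal.coe_le_coe_iff.2 hε.le

/-- A generic compact metric space has zero lower box dimension and infinite upper
box dimension. -/
theorem residual_lowerBoxDim_zero_upperBoxDim_top :
    {p : GHSpace | lowerBoxDim p.Rep = 0 ∧ upperBoxDim p.Rep = ⊤} ∈ residual GHSpace := by
  have hpos (m : ℕ) : (0 : ℝ) < 1 / (m + 1) := Nat.one_div_pos_of_nat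
  have hle (m : ℕ) : (1 : ℝ) / (m + 1) ≤ 1 := div_le_one_of_le₀ (by simp) (by positivity)
  have low_mem (i : ℕ × ℕ) :
      {p : GHSpace | ∃ ε ∈ Ioo 0 (1 / (i.1 + 1 : ℝ)), boxRatio p.Rep ε < 1 / (i.2 + 1)} ∈
        residual GHSpace :=
    residual_of_dense_open (isOpen_setOf_exists_boxRatio_lt (hle _) _)
      (dense_setOf_exists_boxRatio_lt (hpos _) (hpos _))
  have high_mem (i : ℕ × ℕ) :
      {p : GHSpace | ∃ ε ∈ Ioo 0 (1 / (i.1 + 1 : ℝ)), (i.2 : ℝ) < boxRatio p.Rep ε} ∈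
        residual GHSpace :=
    residual_of_dense_open (isOpen_setOf_exists_lt_boxRatio (hle _) _)
      (dense_setOf_exists_lt_boxRatio (hpos _) _)
  filter_upwards [countable_iInter_mem.2 low_mem, countable_iInter_mem.2 high_mem] with p hlow hhigh
  simp only [mem_iInter] at hlow hhigh
  refine ⟨lowerBoxDim_eq_zero fun c hc => ?_, upperBoxDim_eq_top fun c => ?_⟩
  · obtain ⟨n, hn⟩ := exists_nat_one_div_lt hc
    exact frequently_nhdsGT_zero_of_forall_nat fun m =>
      (hlow (m, n)).imp fun _ hε => ⟨hε.1, hε.2.trans hn⟩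
  · obtain ⟨n, hn⟩ := exists_nat_gt c
    exact frequently_nhdsGT_zero_of_forall_nat fun m =>
      (hhigh (m, n)).imp fun _ hε => ⟨hε.1, hn.trans hε.2⟩
end
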